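/- arXiv:1106.1056 — 13 statements merged into one kernel-verified Lean document; each statement's English description precedes it below -/
import Mathlib

section
/- Let P and P' be orthogonal projections onto subspaces E and E' of R^p. Then the sequence of iterates (P P')^n converges, as n → ∞, to the orthogonal projection R onto the intersection E ∩ E'. -/
/-!
Write `T = P P'` and `R` for the projection onto `E ⊓ E'`. Since `R` projects onto a subspace of
both `E` and `E'`, and all three maps are self-adjoint, `T R = R = R T`; hence
`Tⁿ - R = (T - R)ⁿ` for `n ≥ 1`. Now `T - R = T (1 - R)`, and `T` strictly shrinks every nonzero
vector orthogonal to `E ⊓ E'` (such a vector lies outside `E` or outside `E'`, and a projection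
strictly shrinks exactly the vectors outside its range). So `T - R` strictly shrinks every nonzero
vector, which by compactness of the unit sphere means `‖T - R‖ < 1`, and `(T - R)ⁿ → 0`.
-/

open Filter Topology

theorem pow_mul_eq_self_of_mul_eq_self {M : Type*} [Monoid M] {a e : M} (h : a * e = e) (n : ℕ) :
    a ^ n * e = e := by
  induction n with
  | zero => rw [pow_zero, one_mul]
  | succ n ih => rw [pow_succ, mul_assoc, h, ih]

theorem sub_pow_succ_of_mul_eq_self {R : Type*} [Ring R] {a e : R} (he : IsIdempotentElem e)
    (hae : a * e = e) (hea : e * a = e) (n : ℕ) : (a - e) ^ (n + 1) = a ^ (n + 1) - e := by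
  induction n with
  | zero => rw [zero_add, pow_one, pow_one]
  | succ n ih =>
    rw [pow_succ, ih, sub_mul, mul_sub, mul_sub, ← pow_succ,
      pow_mul_eq_self_of_mul_eq_self hae, hea, he.eq, sub_self, sub_zero]

theorem tendsto_pow_atTop_nhds_of_norm_sub_lt_one {R : Type*} [SeminormedRing R] {a e : R}
    (he : IsIdempotentElem e) (hae : a * e = e) (hea : e * a = e) (h : ‖a - e‖ < 1) :
    Tendsto (fun n : ℕ ↦ a ^ n) atTop (𝓝 e) := by
  rw [← tendsto_add_atTop_iff_nat 1]
  have hlim := ((tendsto_pow_atTop_nhds_zero_of_norm_lt_one h).comp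
    (tendsto_add_atTop_nat 1)).add_const e
  rw [zero_add] at hlim
  refine hlim.congr fun n ↦ ?_
  simp only [Function.comp_apply, sub_pow_succ_of_mul_eq_self he hae hea, sub_add_cancel]

theorem ContinuousLinearMap.norm_lt_one_of_norm_apply_lt {𝕜 E F : Type*} [RCLike 𝕜]
    [NormedAddCommGroup E] [NormedSpace 𝕜 E] [FiniteDimensional 𝕜 E] [NormedAddCommGroup F]
    [NormedSpace 𝕜 F] (f : E →L[𝕜] F) (hf : ∀ x ≠ 0, ‖f x‖ < ‖x‖) : ‖f‖ < 1 := by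
  have := FiniteDimensional.proper_rclike 𝕜 E
  rcases (Metric.sphere (0 : E) 1).eq_empty_or_nonempty with hempty | hne
  · refine (f.opNorm_le_of_unit_norm le_rfl fun x hx ↦ ?_).trans_lt one_pos
    have : x ∈ Metric.sphere (0 : E) 1 := mem_sphere_zero_iff_norm.mpr hx
    simp [hempty] at this
  obtain ⟨x₀, hx₀, hmax⟩ :=
    (isCompact_sphere (0 : E) 1).exists_isMaxOn hne (continuous_norm.comp f.continuous).continuousOn
  have hx₀ : ‖x₀‖ = 1 := mem_sphere_zero_iff_norm.mp hx₀
  calc ‖f‖ ≤ ‖f x₀‖ :=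
        f.opNorm_le_of_unit_norm (norm_nonneg _) fun x hx ↦ hmax (mem_sphere_zero_iff_norm.mpr hx)
    _ < ‖x₀‖ := hf x₀ (norm_ne_zero_iff.mp (hx₀.symm ▸ one_ne_zero))
    _ = 1 := hx₀

namespace Submodule

variable {𝕜 E : Type*} [RCLike 𝕜] [NormedAddCommGroup E] [InnerProductSpace 𝕜 E]

theorem norm_starProjection_apply_lt {K : Submodule 𝕜 E} [K.HasOrthogonalProjection] {v : E}
    (hv : v ∉ K) : ‖K.starProjection v‖ < ‖v‖ :=
  (K.norm_starProjection_apply_le v).lt_of_ne fun h ↦ hv ((K.mem_iff_norm_starProjection v).mpr h)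

theorem starProjection_mul_starProjection_of_le {U V : Submodule 𝕜 E} [U.HasOrthogonalProjection]
    [V.HasOrthogonalProjection] (h : U ≤ V) : V.starProjection * U.starProjection = U.starProjection :=
  ContinuousLinearMap.ext fun x ↦ starProjection_eq_self_iff.mpr (h (U.starProjection_apply_mem x))

variable {K L : Submodule 𝕜 E} [K.HasOrthogonalProjection] [L.HasOrthogonalProjection]

theorem norm_starProjection_mul_apply_lt {v : E} (hv : v ∉ K ⊓ L) :
    ‖(K.starProjection * L.starProjection) v‖ < ‖v‖ := by
  by_cases hvL : v ∈ L
  · rw [mul_apply_eq_comp, starProjection_eq_self_iff.mpr hvL]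
    exact norm_starProjection_apply_lt fun hvK ↦ hv ⟨hvK, hvL⟩
  · exact (K.norm_starProjection_apply_le _).trans_lt (norm_starProjection_apply_lt hvL)

variable [(K ⊓ L).HasOrthogonalProjection]

theorem starProjection_mul_mul_starProjection_inf :
    K.starProjection * L.starProjection * (K ⊓ L).starProjection = (K ⊓ L).starProjection := by
  rw [mul_assoc, starProjection_mul_starProjection_of_le inf_le_right,
    starProjection_mul_starProjection_of_le inf_le_left]

theorem starProjection_inf_mul_starProjection_mul :
    (K ⊓ L).starProjection * (K.starProjection * L.starProjection) = (K ⊓ L).starProjection := by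
  have hK : (K ⊓ L).starProjection * K.starProjection = (K ⊓ L).starProjection :=
    starProjection_comp_starProjection_of_le inf_le_left
  have hL : (K ⊓ L).starProjection * L.starProjection = (K ⊓ L).starProjection :=
    starProjection_comp_starProjection_of_le inf_le_right
  rw [← mul_assoc, hK, hL]

theorem norm_starProjection_mul_sub_starProjection_inf_apply_lt {x : E} (hx : x ≠ 0) :
    ‖(K.starProjection * L.starProjection - (K ⊓ L).starProjection) x‖ < ‖x‖ := by
  have hxy : (K.starProjection * L.starProjection - (K ⊓ L).starProjection) x =
      (K.starProjection * L.starProjection) ((K ⊓ L)ᗮ.starProjection x) := by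
    rw [starProjection_orthogonal', ← mul_apply_eq_comp, mul_sub, mul_one,
      starProjection_mul_mul_starProjection_inf]
  rw [hxy]
  by_cases hy : (K ⊓ L)ᗮ.starProjection x ∈ K ⊓ L
  · rw [disjoint_def.mp (K ⊓ L).orthogonal_disjoint _ hy ((K ⊓ L)ᗮ.starProjection_apply_mem x),
      map_zero, norm_zero]
    exact norm_pos_iff.mpr hx
  · exact (norm_starProjection_mul_apply_lt hy).trans_le ((K ⊓ L)ᗮ.norm_starProjection_apply_le x)

end Submodule

theorem Submodule.tendsto_starProjection_mul_pow {𝕜 E : Type*} [RCLike 𝕜] [NormedAddCommGroup E]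
    [InnerProductSpace 𝕜 E] [FiniteDimensional 𝕜 E] (K L : Submodule 𝕜 E) :
    Tendsto (fun n : ℕ ↦ (K.starProjection * L.starProjection) ^ n) atTop
      (𝓝 (K ⊓ L).starProjection) :=
  tendsto_pow_atTop_nhds_of_norm_sub_lt_one (isIdempotentElem_starProjection (K ⊓ L))
    starProjection_mul_mul_starProjection_inf starProjection_inf_mul_starProjection_mul
    (ContinuousLinearMap.norm_lt_one_of_norm_apply_lt _ fun _ ↦
      norm_starProjection_mul_sub_starProjection_inf_apply_lt)

/-- The iterates `(P P')ⁿ` of the composition of two orthogonal projections converge to the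
orthogonal projection onto the intersection of the two subspaces. -/
theorem alternating_projections_tendsto
    (p : ℕ) (E E' : Submodule ℝ (EuclideanSpace ℝ (Fin p))) :
    Tendsto
      (fun n : ℕ =>
        ((E.subtypeL ∘L E.orthogonalProjectionOnto) ∘L
          (E'.subtypeL ∘L E'.orthogonalProjectionOnto)) ^ n)
      atTop
      (nhds ((E ⊓ E').subtypeL ∘L (E ⊓ E').orthogonalProjectionOnto)) :=
  E.tendsto_starProjection_mul_pow E'
end

section
/- Let Z be an integrable random vector in R^p, Y a random variable, and P_c an orthogonal projection with Q_c = I − P_c. Suppose (i) for every measurable set A, P(Y ∈ A | Z) = P(Y ∈ A | P_c Z) a.s. (existence of the central subspace with projection P_c), and (ii) the linearity condition Q_c E[Z | P_c Z] = 0 a.s. Then for every measurable function ψ : R → R with E|Z ψ(Y)| < ∞, the vector E[Z ψ(Y)] lies in the range of P_c, i.e. Q_c E[Z ψ(Y)] = 0. -/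
/-!
Fix a coordinate `j` and put `W = (Q_c Z)_j`; the linearity condition says `E[W | P_c Z] = 0`.
For an event `{Y ∈ A}`, conditioning first on `Z` (of which `W` is a function) and then using the
central subspace property gives
`E[W 1_A(Y)] = E[W P(Y ∈ A | P_c Z)] = E[E[W | P_c Z] P(Y ∈ A | P_c Z)] = 0`.
Hence `E[W | Y] = 0`, and so `E[W ψ(Y)] = 0`.
-/

open MeasureTheory Matrix

namespace MeasureTheory

variable {Ω : Type*} {m₀ : MeasurableSpace Ω} {μ : Measure Ω}

section Matrix

variable {ι κ : Type*} [Fintype κ]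

theorem Integrable.mulVec_apply (M : Matrix ι κ ℝ) {f : Ω → κ → ℝ}
    (hf : ∀ k, Integrable (fun ω => f ω k) μ) (i : ι) :
    Integrable (fun ω => (M *ᵥ f ω) i) μ := by
  simpa only [mulVec, dotProduct] using integrable_finsetSum _ fun k _ => (hf k).const_mul (M i k)

theorem mulVec_integral (M : Matrix ι κ ℝ) {f : Ω → κ → ℝ}
    (hf : ∀ k, Integrable (fun ω => f ω k) μ) :
    M *ᵥ (fun k => ∫ ω, f ω k ∂μ) = fun i => ∫ ω, (M *ᵥ f ω) i ∂μ := by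
  ext i
  simp only [mulVec, dotProduct]
  rw [integral_finsetSum _ fun k _ => (hf k).const_mul (M i k)]
  simp only [integral_const_mul]

theorem condExp_mulVec_apply (M : Matrix ι κ ℝ) {f : Ω → κ → ℝ}
    (hf : ∀ k, Integrable (fun ω => f ω k) μ) (m : MeasurableSpace Ω) (i : ι) :
    μ[fun ω => (M *ᵥ f ω) i | m] =ᵐ[μ] fun ω => (M *ᵥ fun k => μ[fun ω' => f ω' k | m] ω) i := by
  have hsum : (fun ω => (M *ᵥ f ω) i) = ∑ k, M i k • fun ω => f ω k := by
    ext ω; simp [mulVec, dotProduct]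
  have hterm : ∀ k, μ[M i k • fun ω => f ω k | m] =ᵐ[μ] M i k • μ[fun ω => f ω k | m] :=
    fun k => condExp_smul _ _ m
  rw [hsum]
  filter_upwards [condExp_finsetSum (s := .univ) (fun k _ => (hf k).smul (M i k)) m,
    ae_all_iff.2 hterm] with ω hω hterm
  simp [hω, hterm, mulVec, dotProduct]

end Matrix

variable {m : MeasurableSpace Ω}

theorem condExp_ae_eq_zero_of_forall_setIntegral_eq_zero (hm : m ≤ m₀) [SigmaFinite (μ.trim hm)]
    {f : Ω → ℝ} (hf : Integrable f μ) (h : ∀ s, MeasurableSet[m] s → ∫ ω in s, f ω ∂μ = 0) :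
    μ[f | m] =ᵐ[μ] 0 :=
  (ae_eq_condExp_of_forall_setIntegral_eq hm hf (fun _ _ _ => integrableOn_zero)
    (fun s hs _ => by simp [h s hs]) aestronglyMeasurable_const).symm

theorem integral_mul_eq_zero_of_condExp_ae_eq_zero (hm : m ≤ m₀) [SigmaFinite (μ.trim hm)]
    {f g : Ω → ℝ} (hg : StronglyMeasurable[m] g) (hf : Integrable f μ)
    (hgf : Integrable (fun ω => g ω * f ω) μ) (hf0 : μ[f | m] =ᵐ[μ] 0) :
    ∫ ω, g ω * f ω ∂μ = 0 := by
  rw [← integral_condExp hm]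
  refine integral_eq_zero_of_ae ?_
  filter_upwards [condExp_mul_of_stronglyMeasurable_left hg hgf hf, hf0] with ω h h0
  exact h.trans (by simp [h0])

/-- `hff` is the conditional independence of `f` and `m'` given `m`. -/
theorem integral_mul_eq_zero_of_condExp_ae_eq [IsFiniteMeasure μ] {m' : MeasurableSpace Ω}
    (hm : m ≤ m₀) (hm' : m' ≤ m₀) {W f : Ω → ℝ} (hW : StronglyMeasurable[m'] W)
    (hWint : Integrable W μ) (hW0 : μ[W | m] =ᵐ[μ] 0) (hf : AEStronglyMeasurable[m₀] f μ) {C : ℝ}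
    (hfC : ∀ᵐ ω ∂μ, |f ω| ≤ C) (hff : μ[f | m'] =ᵐ[μ] μ[f | m]) :
    ∫ ω, W ω * f ω ∂μ = 0 := by
  have hfint : Integrable f μ := .of_bound hf C hfC
  have hcond_bdd : ∀ᵐ ω ∂μ, ‖μ[f | m] ω‖ ≤ C := ae_bdd_abs_condExp_of_ae_bdd_abs hfC
  calc ∫ ω, W ω * f ω ∂μ
      = ∫ ω, μ[fun ω => W ω * f ω | m'] ω ∂μ := (integral_condExp hm').symm
    _ = ∫ ω, W ω * μ[f | m] ω ∂μ := by
        refine integral_congr_ae ?_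
        filter_upwards [condExp_mul_of_stronglyMeasurable_left hW
          (hWint.mul_bdd hf hfC) hfint, hff] with ω h h'
        rw [Pi.mul_apply, h'] at h
        exact h
    _ = ∫ ω, μ[f | m] ω * W ω ∂μ := by simp_rw [mul_comm]
    _ = 0 := integral_mul_eq_zero_of_condExp_ae_eq_zero hm stronglyMeasurable_condExp hWint
        (hWint.bdd_mul (stronglyMeasurable_condExp.mono hm).aestronglyMeasurable hcond_bdd) hW0

theorem condExp_comap_ae_eq_zero_of_condExp_indicator_ae_eq [IsFiniteMeasure μ]
    {m' : MeasurableSpace Ω} (hm : m ≤ m₀) (hm' : m' ≤ m₀) {β : Type*} [MeasurableSpace β]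
    {Y : Ω → β} (hY : Measurable[m₀] Y) {W : Ω → ℝ} (hW : StronglyMeasurable[m'] W)
    (hWint : Integrable W μ) (hW0 : μ[W | m] =ᵐ[μ] 0)
    (hYind : ∀ A : Set β, MeasurableSet A →
      μ[fun ω => A.indicator (fun _ => (1 : ℝ)) (Y ω) | m']
        =ᵐ[μ] μ[fun ω => A.indicator (fun _ => (1 : ℝ)) (Y ω) | m]) :
    μ[W | MeasurableSpace.comap Y inferInstance] =ᵐ[μ] 0 := by
  refine condExp_ae_eq_zero_of_forall_setIntegral_eq_zero hY.comap_le hWint ?_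
  rintro _ ⟨A, hA, rfl⟩
  rw [← integral_indicator (hY hA)]
  calc ∫ ω, (Y ⁻¹' A).indicator W ω ∂μ
      = ∫ ω, W ω * A.indicator (fun _ => (1 : ℝ)) (Y ω) ∂μ := by
        congr 1; ext ω; by_cases h : Y ω ∈ A <;> simp [h]
    _ = 0 := integral_mul_eq_zero_of_condExp_ae_eq hm hm' hW hWint hW0
        ((measurable_const.indicator hA).comp hY).aestronglyMeasurable (C := 1)
        (ae_of_all _ fun ω => by by_cases h : Y ω ∈ A <;> simp [h]) (hYind A hA)

end MeasureTheory

theorem tf1_mean_in_central_subspace_general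
    {Ω : Type*} [mΩ : MeasurableSpace Ω] (μ : Measure Ω) [IsProbabilityMeasure μ]
    (p : ℕ) (Z : Ω → (Fin p → ℝ)) (hZmeas : Measurable Z)
    (hZint : ∀ i, Integrable (fun ω => Z ω i) μ)
    (Y : Ω → ℝ) (hYmeas : Measurable Y)
    (Pc : Matrix (Fin p) (Fin p) ℝ)
    -- the σ-algebras generated by `Z` and by `P_c Z`
    (mZ : MeasurableSpace Ω) (hmZ : mZ = MeasurableSpace.comap Z inferInstance)
    (m : MeasurableSpace Ω)
    (hm : m = MeasurableSpace.comap (fun ω => Pc.mulVec (Z ω)) inferInstance)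
    -- (i) existence of the CS: `P(Y ∈ A | Z) = P(Y ∈ A | P_c Z)` a.s. for all measurable `A`
    (hCS : ∀ A : Set ℝ, MeasurableSet A →
      μ[fun ω => Set.indicator A (fun _ => (1 : ℝ)) (Y ω) | mZ]
        =ᵐ[μ] μ[fun ω => Set.indicator A (fun _ => (1 : ℝ)) (Y ω) | m])
    -- (ii) linearity condition: `Q_c E[Z | P_c Z] = 0` a.s.
    (hlin : ∀ᵐ ω ∂μ, (1 - Pc).mulVec (fun i => (μ[fun ω' => Z ω' i | m]) ω) = 0) :
    ∀ ψ : ℝ → ℝ, Measurable ψ →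
      (∀ i, Integrable (fun ω => Z ω i * ψ (Y ω)) μ) →
      (1 - Pc).mulVec (fun i => ∫ ω, Z ω i * ψ (Y ω) ∂μ) = 0 := by
  intro ψ hψ hZψ
  have hmZ_le : mZ ≤ mΩ := hmZ ▸ hZmeas.comap_le
  have hm_le : m ≤ mΩ :=
    hm ▸ ((continuous_const.matrix_mulVec continuous_id).measurable.comp hZmeas).comap_le
  rw [mulVec_integral _ hZψ]
  ext j
  set W : Ω → ℝ := fun ω => ((1 - Pc) *ᵥ Z ω) j
  have hWint : Integrable W μ := .mulVec_apply _ hZint j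
  have hW_mZ : StronglyMeasurable[mZ] W := hmZ ▸
    (((continuous_apply j).comp (continuous_const.matrix_mulVec continuous_id)).measurable.comp
      (comap_measurable Z)).stronglyMeasurable
  have hW0 : μ[W | m] =ᵐ[μ] 0 :=
    (condExp_mulVec_apply _ hZint m j).trans (hlin.mono fun ω h => congrFun h j)
  have hWY : μ[W | MeasurableSpace.comap Y inferInstance] =ᵐ[μ] 0 :=
    condExp_comap_ae_eq_zero_of_condExp_indicator_ae_eq hm_le hmZ_le hYmeas hW_mZ hWint hW0 hCS
  have hψW : (fun ω => ((1 - Pc) *ᵥ fun i => Z ω i * ψ (Y ω)) j) = fun ω => ψ (Y ω) * W ω := by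
    ext ω
    rw [show (fun i => Z ω i * ψ (Y ω)) = ψ (Y ω) • Z ω by ext; simp [mul_comm], mulVec_smul]
    rfl
  rw [hψW]
  exact integral_mul_eq_zero_of_condExp_ae_eq_zero hYmeas.comap_le
    (hψ.comp (comap_measurable Y)).stronglyMeasurable hWint (hψW ▸ .mulVec_apply _ hZψ j) hWY

/-- TF1 basic theorem: under existence of the central subspace (conditional independence of `Y`
and `Z` given `P_c Z`, expressed via conditional probabilities of events `{Y ∈ A}`) and the
linearity condition, `E[Z ψ(Y)]` lies in the central subspace, i.e. `Q_c E[Z ψ(Y)] = 0`. -/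
theorem tf1_mean_in_central_subspace
    {Ω : Type*} [mΩ : MeasurableSpace Ω] (μ : Measure Ω) [IsProbabilityMeasure μ]
    (p : ℕ) (Z : Ω → (Fin p → ℝ)) (hZmeas : Measurable Z)
    (hZint : ∀ i, Integrable (fun ω => Z ω i) μ)
    (Y : Ω → ℝ) (hYmeas : Measurable Y)
    (Pc : Matrix (Fin p) (Fin p) ℝ) (hPcsymm : Pc.IsSymm) (hPcidem : Pc * Pc = Pc)
    -- the σ-algebras generated by `Z` and by `P_c Z`
    (mZ : MeasurableSpace Ω) (hmZ : mZ = MeasurableSpace.comap Z inferInstance)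
    (m : MeasurableSpace Ω)
    (hm : m = MeasurableSpace.comap (fun ω => Pc.mulVec (Z ω)) inferInstance)
    -- (i) existence of the CS: `P(Y ∈ A | Z) = P(Y ∈ A | P_c Z)` a.s. for all measurable `A`
    (hCS : ∀ A : Set ℝ, MeasurableSet A →
      μ[fun ω => Set.indicator A (fun _ => (1 : ℝ)) (Y ω) | mZ]
        =ᵐ[μ] μ[fun ω => Set.indicator A (fun _ => (1 : ℝ)) (Y ω) | m])
    -- (ii) linearity condition: `Q_c E[Z | P_c Z] = 0` a.s.
    (hlin : ∀ᵐ ω ∂μ, (1 - Pc).mulVec (fun i => (μ[fun ω' => Z ω' i | m]) ω) = 0) :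
    ∀ ψ : ℝ → ℝ, Measurable ψ →
      (∀ i, Integrable (fun ω => Z ω i * ψ (Y ω)) μ) →
      (1 - Pc).mulVec (fun i => ∫ ω, Z ω i * ψ (Y ω) ∂μ) = 0 :=
  tf1_mean_in_central_subspace_general (mΩ := mΩ) μ p Z hZmeas hZint Y hYmeas Pc mZ hmZ m hm hCS
    hlin
end

section
/- Suppose the distribution of a random vector Z in R^p is invariant under the orthogonal reflection through a subspace E_c, i.e. Z has the same distribution as (2P_c − I)Z where P_c is the orthogonal projection onto E_c. Then the linearity condition holds: Q_c E[Z | P_c Z] = 0 almost surely, where Q_c = I − P_c. -/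
/-!
Write `S = 2 P_c - I`. Idempotence of `P_c` gives `P_c S = P_c`, so `S Z` and `Z` have the same
projection `P_c Z`; as they also have the same law, they have the same conditional expectation
given `P_c Z`. By linearity `v := E[Z | P_c Z]` then satisfies `v = S v`, i.e. `P_c v = v`.
-/

open MeasureTheory Matrix

section

variable {Ω E F G : Type*} {mΩ : MeasurableSpace Ω} [MeasurableSpace E] [MeasurableSpace F]
  [NormedAddCommGroup G] [NormedSpace ℝ G] [CompleteSpace G] {μ : Measure Ω}

/-- The pairs `(X, φ ∘ X)` and `(Y, φ ∘ Y) = (Y, φ ∘ X)` have the same law. -/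
theorem condExp_comap_ae_eq_of_map_eq [IsFiniteMeasure μ] {X Y : Ω → E} (hX : Measurable X)
    (hY : Measurable Y) (hXY : μ.map X = μ.map Y) {φ : E → F} (hφ : Measurable φ)
    (hφY : φ ∘ Y = φ ∘ X) {g : E → G} (hg : StronglyMeasurable g)
    (hgX : Integrable (g ∘ X) μ) :
    μ[g ∘ X | MeasurableSpace.comap (φ ∘ X) ‹_›] =ᵐ[μ]
      μ[g ∘ Y | MeasurableSpace.comap (φ ∘ X) ‹_›] := by
  have hle : MeasurableSpace.comap (φ ∘ X) ‹_› ≤ mΩ := (hφ.comp hX).comap_le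
  have hgY : Integrable (g ∘ Y) μ := by
    rwa [← integrable_map_measure hg.aestronglyMeasurable hY.aemeasurable, ← hXY,
      integrable_map_measure hg.aestronglyMeasurable hX.aemeasurable]
  refine ae_eq_condExp_of_forall_setIntegral_eq hle hgY
    (fun s _ _ => integrable_condExp.integrableOn) (fun s hs _ => ?_)
    stronglyMeasurable_condExp.aestronglyMeasurable
  obtain ⟨B, hB, rfl⟩ := hs
  calc ∫ ω in (φ ∘ X) ⁻¹' B, μ[g ∘ X | _] ω ∂μ
      = ∫ ω in X ⁻¹' (φ ⁻¹' B), g (X ω) ∂μ := setIntegral_condExp hle hgX ⟨B, hB, rfl⟩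
    _ = ∫ x in φ ⁻¹' B, g x ∂(μ.map X) :=
        (setIntegral_map (hφ hB) hg.aestronglyMeasurable hX.aemeasurable).symm
    _ = ∫ x in φ ⁻¹' B, g x ∂(μ.map Y) := by rw [hXY]
    _ = ∫ ω in (φ ∘ X) ⁻¹' B, (g ∘ Y) ω ∂μ := by
        rw [setIntegral_map (hφ hB) hg.aestronglyMeasurable hY.aemeasurable, ← hφY]
        rfl

end

namespace Matrix

variable {n : Type*} [Fintype n] [DecidableEq n]

theorem mul_two_smul_sub_one_of_mul_self {R : Type*} [CommRing R] {P : Matrix n n R}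
    (hP : P * P = P) : P * ((2 : R) • P - 1) = P := by
  rw [Matrix.mul_sub, Matrix.mul_smul, hP, Matrix.mul_one, two_smul, add_sub_cancel_right]

theorem one_sub_mulVec_eq_zero_of_two_smul_sub_one_mulVec {K : Type*} [Field K] [NeZero (2 : K)]
    {P : Matrix n n K} {v : n → K} (hv : ((2 : K) • P - 1) *ᵥ v = v) : (1 - P) *ᵥ v = 0 := by
  have h2 : (2 : K) • (P *ᵥ v) = (2 : K) • v := by
    rw [← smul_mulVec, ← sub_add_cancel ((2 : K) • P) 1, add_mulVec, hv, one_mulVec, two_smul]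
  rw [sub_mulVec, one_mulVec, smul_right_injective _ (two_ne_zero' K) h2, sub_self]

end Matrix

theorem reflection_invariance_implies_linearity_condition_general
    {Ω : Type*} [mΩ : MeasurableSpace Ω] (μ : Measure Ω) [IsProbabilityMeasure μ]
    (p : ℕ) (Z : Ω → (Fin p → ℝ)) (hZmeas : Measurable Z)
    (hZint : ∀ i, Integrable (fun ω => Z ω i) μ)
    (Pc : Matrix (Fin p) (Fin p) ℝ) (hPcidem : Pc * Pc = Pc)
    -- distributional invariance `Z =d (2 P_c - I) Z`
    (hsym : Measure.map Z μ = Measure.map (fun ω => ((2 : ℝ) • Pc - 1).mulVec (Z ω)) μ)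
    (m : MeasurableSpace Ω)
    (hm : m = MeasurableSpace.comap (fun ω => Pc.mulVec (Z ω)) inferInstance) :
    ∀ᵐ ω ∂μ, (1 - Pc).mulVec (fun i => (μ[fun ω' => Z ω' i | m]) ω) = 0 := by
  set S := (2 : ℝ) • Pc - 1
  have hZ : Integrable Z μ := Integrable.of_eval hZint
  have hPcS : Pc.mulVec ∘ S.mulVec ∘ Z = Pc.mulVec ∘ Z := by
    ext1 ω
    simp only [Function.comp_apply, mulVec_mulVec, mul_two_smul_sub_one_of_mul_self hPcidem, S]
  have hreflect : μ[Z | m] =ᵐ[μ] μ[S.mulVec ∘ Z | m] := by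
    rw [hm]
    exact condExp_comap_ae_eq_of_map_eq hZmeas (by fun_prop) hsym (by fun_prop) hPcS
      stronglyMeasurable_id hZ
  have hlinear := (LinearMap.toContinuousLinearMap (mulVecLin S)).comp_condExp_comm (m := m) hZ
  have hcoord i := (ContinuousLinearMap.proj (R := ℝ) i).comp_condExp_comm (m := m) hZ
  filter_upwards [hreflect, hlinear, ae_all_iff.2 hcoord] with ω hω hSω hiω
  have hv : (fun i => (μ[fun ω' => Z ω' i | m]) ω) = μ[Z | m] ω := funext fun i => (hiω i).symm
  rw [hv]
  exact one_sub_mulVec_eq_zero_of_two_smul_sub_one_mulVec (hSω.trans hω.symm)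

/-- If the distribution of `Z` is invariant under the orthogonal reflection `2 P_c - I` through
the subspace `E_c`, then the linearity condition `Q_c E[Z | P_c Z] = 0` a.s. holds. -/
theorem reflection_invariance_implies_linearity_condition
    {Ω : Type*} [mΩ : MeasurableSpace Ω] (μ : Measure Ω) [IsProbabilityMeasure μ]
    (p : ℕ) (Z : Ω → (Fin p → ℝ)) (hZmeas : Measurable Z)
    (hZint : ∀ i, Integrable (fun ω => Z ω i) μ)
    (Pc : Matrix (Fin p) (Fin p) ℝ) (hPcsymm : Pc.IsSymm) (hPcidem : Pc * Pc = Pc)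
    -- distributional invariance `Z =d (2 P_c - I) Z`
    (hsym : Measure.map Z μ = Measure.map (fun ω => ((2 : ℝ) • Pc - 1).mulVec (Z ω)) μ)
    (m : MeasurableSpace Ω)
    (hm : m = MeasurableSpace.comap (fun ω => Pc.mulVec (Z ω)) inferInstance) :
    ∀ᵐ ω ∂μ, (1 - Pc).mulVec (fun i => (μ[fun ω' => Z ω' i | m]) ω) = 0 :=
  reflection_invariance_implies_linearity_condition_general (mΩ := mΩ) μ p Z hZmeas hZint Pc hPcidem
    hsym m hm
end

section
/- Let Z be a square-integrable random vector in R^p and Y a random variable. Assume (i) Y ⫫ Z | P_c Z (existence of the central subspace with orthogonal projection P_c onto E_c of dimension d), (ii) the linearity condition Q_c E[Z | P_c Z] = 0 a.s., and (iii) the diagonal conditional variance condition Var(Z | P_c Z) = λ Q_c a.s. Then for every measurable function ψ : R → R with E‖ZZ^T ψ(Y)‖ < ∞, the column space of the matrix M_ψ − λ*_ψ I is contained in E_c, where M_ψ = E[Z Z^T ψ(Y)] and λ*_ψ = E[‖Q_c Z‖² ψ(Y)] / (p − d). Equivalently, every vector of E_c^⊥ is an eigenvector of M_ψ with eigenvalue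 λ*_ψ. -/
open MeasureTheory Matrix

/-- The `(i,j)` entry of the conditional covariance matrix of a random vector `W` given the
σ-algebra `m`. -/
noncomputable def condVarEntry {Ω : Type*} (mΩ : MeasurableSpace Ω)
    (μ : @MeasureTheory.Measure Ω mΩ)
    (m : MeasurableSpace Ω) {p : ℕ} (W : Ω → (Fin p → ℝ)) (i j : Fin p) : Ω → ℝ :=
  μ[fun ω => (W ω i - (μ[fun ω' => W ω' i | m]) ω) *
      (W ω j - (μ[fun ω' => W ω' j | m]) ω) | m]

/-!
Write `Q = 1 - P_c`. The linearity condition and the DCV condition give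
`E[(QZ)_i Z_j | P_c Z] = λ Q_ij`, hence `E[‖QZ‖² | P_c Z] = λ (p - d)` because
`tr Q = p - d`. So `H = (p - d) (QZ)_i Z_j - Q_ij ‖QZ‖²` is a function of `Z` with
`E[H | P_c Z] = 0`; since `Y ⫫ Z | P_c Z`, it is orthogonal to every `ψ(Y)`, i.e.
`Q M_ψ = λ*_ψ Q`. Working with `H` rather than with `λ ψ(Y)` avoids any integrability
assumption on `λ`. Finally `M_ψ` is symmetric, so also `M_ψ Q = λ*_ψ Q`, which gives both
claims.
-/

@[fun_prop]
theorem Measurable.const_mulVec {α ι κ : Type*} [Fintype ι] [Fintype κ]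
    {mα : MeasurableSpace α} (A : Matrix ι κ ℝ) {f : α → κ → ℝ} (hf : Measurable f) :
    Measurable fun a => A *ᵥ f a :=
  (continuous_const.matrix_mulVec continuous_id).measurable.comp hf

namespace Matrix

theorem trace_eq_rank_of_isIdempotentElem {n K : Type*} [Fintype n] [DecidableEq n] [Field K]
    {P : Matrix n n K} (hP : IsIdempotentElem P) : P.trace = P.rank := by
  have hlin : IsIdempotentElem P.toLin' := hP.map toLinAlgEquiv'
  rw [Matrix.rank, ← Matrix.trace_toLin'_eq,
    (LinearMap.IsIdempotentElem.isProj_range _ hlin).trace]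
  rfl

section CommRing

variable {n R : Type*} [Fintype n] [CommRing R]

theorem mulVec_mul_mul_eq_sum (Q : Matrix n n R) (z : n → R) (t : R) (i j : n) :
    (Q *ᵥ z) i * z j * t = ∑ k, Q i k * (z k * z j * t) := by
  simp only [mulVec, dotProduct, Finset.sum_mul]
  exact Finset.sum_congr rfl fun k _ => by ring

theorem mulVec_dotProduct_mulVec_self {Q : Matrix n n R} (hQ : IsIdempotentElem Q)
    (hQs : Q.IsSymm) (z : n → R) : Q *ᵥ z ⬝ᵥ Q *ᵥ z = Q *ᵥ z ⬝ᵥ z := by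
  rw [dotProduct_mulVec, ← mulVec_transpose, hQs.eq, mulVec_mulVec, hQ.eq]

variable [DecidableEq n] {M P : Matrix n n R} {c : R}

theorem range_mulVecLin_sub_smul_one_le (h : (1 - P) * M = c • (1 - P)) :
    LinearMap.range (M - c • 1).mulVecLin ≤ LinearMap.range P.mulVecLin := by
  have hP : P * (M - c • 1) = M - c • 1 := by
    have h0 : (1 - P) * (M - c • 1) = 0 := by rw [mul_sub, h, Matrix.mul_smul, mul_one, sub_self]
    rw [sub_mul, one_mul, sub_eq_zero] at h0
    exact h0.symm
  rintro _ ⟨v, rfl⟩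
  exact ⟨(M - c • 1) *ᵥ v, by simp only [mulVecLin_apply, mulVec_mulVec, hP]⟩

theorem mulVec_eq_smul_of_mulVec_eq_zero (hM : M.IsSymm) (hP : P.IsSymm)
    (h : (1 - P) * M = c • (1 - P)) {v : n → R} (hv : P *ᵥ v = 0) : M *ᵥ v = c • v := by
  have hQ : (1 - P).IsSymm := isSymm_one.sub hP
  have h' : M * (1 - P) = c • (1 - P) := by
    simpa [transpose_mul, hM.eq, hQ.eq] using congrArg transpose h
  have hQv : (1 - P) *ᵥ v = v := by simp [sub_mulVec, hv]
  rw [← hQv, mulVec_mulVec, h', smul_mulVec]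

end CommRing

end Matrix

section ConditionalIndependence

variable {Ω : Type*} {mZ m mΩ : MeasurableSpace Ω} {μ : Measure Ω} [IsFiniteMeasure μ]

theorem integral_mul_comp_eq_zero_of_integral_mul_indicator_comp_eq_zero {β : Type*}
    [MeasurableSpace β] {Y : Ω → β} (hY : Measurable Y) {H : Ω → ℝ} (hH : Integrable H μ)
    (hA : ∀ A : Set β, MeasurableSet A →
      ∫ ω, H ω * Set.indicator A (fun _ => (1 : ℝ)) (Y ω) ∂μ = 0)
    {ψ : β → ℝ} (hψ : Measurable ψ) (hHψ : Integrable (fun ω => H ω * ψ (Y ω)) μ) :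
    ∫ ω, H ω * ψ (Y ω) ∂μ = 0 := by
  have hmY : MeasurableSpace.comap Y inferInstance ≤ mΩ := hY.comap_le
  have hcond : μ[H | MeasurableSpace.comap Y inferInstance] =ᵐ[μ] 0 := by
    refine (ae_eq_condExp_of_forall_setIntegral_eq hmY hH (fun _ _ _ => integrableOn_zero)
      ?_ aestronglyMeasurable_zero).symm
    rintro _ ⟨A, hA', rfl⟩ -
    rw [integral_zero, ← integral_indicator (hY hA'), ← hA A hA']
    congr 1 with ω
    by_cases hω : Y ω ∈ A <;> simp [hω]
  have hψY : StronglyMeasurable[MeasurableSpace.comap Y inferInstance] (ψ ∘ Y) :=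
    (hψ.comp (comap_measurable Y)).stronglyMeasurable
  calc ∫ ω, H ω * ψ (Y ω) ∂μ
      = ∫ ω, (μ[ψ ∘ Y * H | MeasurableSpace.comap Y inferInstance]) ω ∂μ := by
        rw [integral_condExp hmY]
        simp only [Pi.mul_apply, Function.comp_apply, mul_comm]
    _ = 0 := by
        rw [integral_congr_ae ((condExp_mul_of_stronglyMeasurable_left hψY
          (by rw [mul_comm]; exact hHψ) hH).trans hcond.mul_left)]
        simp

theorem integral_mul_eq_zero_of_condExp_eq (hmZ : mZ ≤ mΩ) (hm : m ≤ mΩ) {H g : Ω → ℝ}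
    (hH : StronglyMeasurable[mZ] H) (hHint : Integrable H μ) (hH0 : μ[H | m] =ᵐ[μ] 0)
    (hg : Integrable g μ) {C : ℝ} (hgC : ∀ᵐ ω ∂μ, |g ω| ≤ C)
    (hgc : μ[g | mZ] =ᵐ[μ] μ[g | m]) :
    ∫ ω, H ω * g ω ∂μ = 0 := by
  have hHg : Integrable (H * g) μ := by
    rw [mul_comm]
    exact hHint.bdd_mul hg.aestronglyMeasurable (c := C) (by simpa using hgC)
  have hbd : ∀ᵐ ω ∂μ, ‖(μ[g | m]) ω‖ ≤ C := by
    simpa using ae_bdd_abs_condExp_of_ae_bdd_abs (m := m) hgC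
  calc ∫ ω, H ω * g ω ∂μ = ∫ ω, (μ[H * g | mZ]) ω ∂μ := (integral_condExp hmZ).symm
    _ = ∫ ω, (μ[g | m] * H) ω ∂μ := by
        refine integral_congr_ae ?_
        filter_upwards [condExp_mul_of_stronglyMeasurable_left hH hHg hg, hgc] with ω h1 h2
        simp [h1, h2, mul_comm]
    _ = ∫ ω, (μ[μ[g | m] * H | m]) ω ∂μ := (integral_condExp hm).symm
    _ = 0 := by
        rw [integral_congr_ae ((condExp_stronglyMeasurable_mul_of_bound hm
          stronglyMeasurable_condExp hHint C hbd).trans hH0.mul_left)]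
        simp

theorem integral_mul_comp_eq_zero_of_condExp_eq_zero (hmZ : mZ ≤ mΩ) (hm : m ≤ mΩ)
    {β : Type*} [MeasurableSpace β] {Y : Ω → β} (hY : Measurable Y)
    (hCI : ∀ A : Set β, MeasurableSet A →
      μ[fun ω => Set.indicator A (fun _ => (1 : ℝ)) (Y ω) | mZ]
        =ᵐ[μ] μ[fun ω => Set.indicator A (fun _ => (1 : ℝ)) (Y ω) | m])
    {H : Ω → ℝ} (hH : StronglyMeasurable[mZ] H) (hHint : Integrable H μ)
    (hH0 : μ[H | m] =ᵐ[μ] 0) {ψ : β → ℝ} (hψ : Measurable ψ)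
    (hHψ : Integrable (fun ω => H ω * ψ (Y ω)) μ) :
    ∫ ω, H ω * ψ (Y ω) ∂μ = 0 := by
  refine integral_mul_comp_eq_zero_of_integral_mul_indicator_comp_eq_zero hY hHint
    (fun A hA => ?_) hψ hHψ
  have hbd : ∀ ω, |Set.indicator A (fun _ => (1 : ℝ)) (Y ω)| ≤ 1 := fun ω => by
    by_cases hω : Y ω ∈ A <;> simp [hω]
  exact integral_mul_eq_zero_of_condExp_eq hmZ hm hH hHint hH0
    (((integrable_const 1).indicator hA).comp_measurable hY) (ae_of_all μ hbd) (hCI A hA)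

theorem mul_integral_mul_comp_eq_of_condExp_ae_eq (hmZ : mZ ≤ mΩ) (hm : m ≤ mΩ)
    {β : Type*} [MeasurableSpace β] {Y : Ω → β} (hY : Measurable Y)
    (hCI : ∀ A : Set β, MeasurableSet A →
      μ[fun ω => Set.indicator A (fun _ => (1 : ℝ)) (Y ω) | mZ]
        =ᵐ[μ] μ[fun ω => Set.indicator A (fun _ => (1 : ℝ)) (Y ω) | m])
    {F G lam : Ω → ℝ} {a b : ℝ}
    (hF : StronglyMeasurable[mZ] F) (hG : StronglyMeasurable[mZ] G)
    (hFint : Integrable F μ) (hGint : Integrable G μ)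
    (hFm : μ[F | m] =ᵐ[μ] fun ω => lam ω * a) (hGm : μ[G | m] =ᵐ[μ] fun ω => lam ω * b)
    {ψ : β → ℝ} (hψ : Measurable ψ) (hFψ : Integrable (fun ω => F ω * ψ (Y ω)) μ)
    (hGψ : Integrable (fun ω => G ω * ψ (Y ω)) μ) :
    b * ∫ ω, F ω * ψ (Y ω) ∂μ = a * ∫ ω, G ω * ψ (Y ω) ∂μ := by
  have hH0 : μ[b • F - a • G | m] =ᵐ[μ] 0 := by
    filter_upwards [condExp_sub (hFint.smul b) (hGint.smul a) m, condExp_smul b F m,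
      condExp_smul a G m, hFm, hGm] with ω h h1 h2 h3 h4
    simp only [h, Pi.sub_apply, h1, h2, Pi.smul_apply, h3, h4, smul_eq_mul, Pi.zero_apply]
    ring
  have hHψ : (fun ω => (b • F - a • G) ω * ψ (Y ω))
      = fun ω => b * (F ω * ψ (Y ω)) - a * (G ω * ψ (Y ω)) := by
    ext ω; simp only [Pi.sub_apply, Pi.smul_apply, smul_eq_mul]; ring
  have h := integral_mul_comp_eq_zero_of_condExp_eq_zero hmZ hm hY hCI
    ((hF.const_smul b).sub (hG.const_smul a)) ((hFint.smul b).sub (hGint.smul a)) hH0 hψ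
    (by rw [hHψ]; exact (hFψ.const_mul b).sub (hGψ.const_mul a))
  rwa [hHψ, integral_sub (hFψ.const_mul b) (hGψ.const_mul a), integral_const_mul,
    integral_const_mul, sub_eq_zero] at h

end ConditionalIndependence

section Moments

variable {Ω n : Type*} [Fintype n] {mΩ : MeasurableSpace Ω} {μ : Measure Ω}
  {W : Ω → n → ℝ} {φ : Ω → ℝ}

theorem integrable_mulVec_mul_mul (Q : Matrix n n ℝ)
    (h : ∀ k j, Integrable (fun ω => W ω k * W ω j * φ ω) μ) (i j : n) :
    Integrable (fun ω => (Q *ᵥ W ω) i * W ω j * φ ω) μ := by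
  simp only [mulVec_mul_mul_eq_sum]
  exact integrable_finsetSum _ fun k _ => (h k j).const_mul _

theorem integral_mulVec_mul_mul (Q : Matrix n n ℝ)
    (h : ∀ k j, Integrable (fun ω => W ω k * W ω j * φ ω) μ) (i j : n) :
    ∫ ω, (Q *ᵥ W ω) i * W ω j * φ ω ∂μ
      = (Q * of fun k j => ∫ ω, W ω k * W ω j * φ ω ∂μ) i j := by
  simp only [mulVec_mul_mul_eq_sum, mul_apply, of_apply]
  rw [integral_finsetSum _ fun k _ => (h k j).const_mul _]
  simp only [integral_const_mul]

end Moments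

section ConditionalMoments

variable {Ω : Type*} {mZ m mΩ : MeasurableSpace Ω} {μ : Measure Ω} [IsFiniteMeasure μ]
  {p : ℕ} {W : Ω → Fin p → ℝ}

theorem condExp_mul_ae_eq_condVarEntry_add (hm : m ≤ mΩ)
    (hW : ∀ i, MemLp (fun ω => W ω i) 2 μ) (i j : Fin p) :
    μ[fun ω => W ω i * W ω j | m] =ᵐ[μ] fun ω => condVarEntry mΩ μ m W i j ω
      + (μ[fun ω => W ω i | m]) ω * (μ[fun ω => W ω j | m]) ω := by
  unfold condVarEntry
  set c : Fin p → Ω → ℝ := fun k => μ[fun ω => W ω k | m]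
  have hc : ∀ k, MemLp (c k) 2 μ := fun k => (hW k).condExp one_le_two
  have hcm : ∀ k, StronglyMeasurable[m] (c k) := fun k => stronglyMeasurable_condExp
  have hWW : Integrable (fun ω => W ω i * W ω j) μ := (hW i).integrable_mul (hW j)
  have hcW := (hc i).integrable_mul (hW j)
  have hcW' := (hc j).integrable_mul (hW i)
  have hcc := (hc i).integrable_mul (hc j)
  have hexpand : (fun ω => (W ω i - c i ω) * (W ω j - c j ω))
      = (fun ω => W ω i * W ω j) - c i * (fun ω => W ω j) - c j * (fun ω => W ω i)
        + c i * c j := by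
    ext ω; simp only [Pi.add_apply, Pi.sub_apply, Pi.mul_apply]; ring
  have hlinear := (condExp_add ((hWW.sub hcW).sub hcW') hcc m).trans
    (((condExp_sub (hWW.sub hcW) hcW' m).trans ((condExp_sub hWW hcW m).sub .rfl)).add .rfl)
  have hcW_cond : μ[c i * fun ω => W ω j | m] =ᵐ[μ] c i * c j :=
    condExp_mul_of_stronglyMeasurable_left (hcm i) hcW ((hW j).integrable one_le_two)
  have hcW'_cond : μ[c j * fun ω => W ω i | m] =ᵐ[μ] c j * c i :=
    condExp_mul_of_stronglyMeasurable_left (hcm j) hcW' ((hW i).integrable one_le_two)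
  have hcc_cond : μ[c i * c j | m] = c i * c j :=
    condExp_of_stronglyMeasurable hm ((hcm i).mul (hcm j)) hcc
  rw [hexpand]
  filter_upwards [hlinear, hcW_cond, hcW'_cond] with ω h h1 h2
  simp only [h, Pi.add_apply, Pi.sub_apply, h1, h2, hcc_cond, Pi.mul_apply]
  ring

theorem condExp_mulVec_mul_ae_eq (hm : m ≤ mΩ) (hW : ∀ i, MemLp (fun ω => W ω i) 2 μ)
    {Q : Matrix (Fin p) (Fin p) ℝ} (hQ : IsIdempotentElem Q) {lam : Ω → ℝ}
    (hlin : ∀ᵐ ω ∂μ, Q *ᵥ (fun i => (μ[fun ω' => W ω' i | m]) ω) = 0)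
    (hcv : ∀ᵐ ω ∂μ, Matrix.of (fun i j => condVarEntry mΩ μ m W i j ω) = lam ω • Q)
    (i j : Fin p) :
    μ[fun ω => (Q *ᵥ W ω) i * W ω j | m] =ᵐ[μ] fun ω => lam ω * Q i j := by
  have hsum : (fun ω => (Q *ᵥ W ω) i * W ω j)
      = ∑ k, Q i k • fun ω => W ω k * W ω j := by
    ext ω; simp [mulVec, dotProduct, Finset.sum_mul, mul_assoc]
  have hWW : ∀ k, Integrable (fun ω => W ω k * W ω j) μ := fun k =>
    (hW k).integrable_mul (hW j)
  set c : Ω → Fin p → ℝ := fun ω k => (μ[fun ω' => W ω' k | m]) ω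
  have hmoment : ∀ᵐ ω ∂μ, ∀ k,
      (μ[fun ω => W ω k * W ω j | m]) ω = condVarEntry mΩ μ m W k j ω + c ω k * c ω j :=
    ae_all_iff.2 fun k => condExp_mul_ae_eq_condVarEntry_add hm hW k j
  have hlin' : ∀ᵐ ω ∂μ, Q *ᵥ c ω = 0 := hlin
  rw [hsum]
  filter_upwards [condExp_finsetSum (s := Finset.univ) (fun k _ => (hWW k).smul (Q i k)) m,
    ae_all_iff.2 fun k => condExp_smul (Q i k) (fun ω => W ω k * W ω j) m, hmoment, hlin', hcv]
    with ω hsumω hsmul hk hlinω hcvω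
  have hcvω' : ∀ k, condVarEntry mΩ μ m W k j ω = lam ω * Q k j := fun k => by
    simpa using congrFun (congrFun hcvω k) j
  calc (μ[∑ k, Q i k • fun ω => W ω k * W ω j | m]) ω
      = ∑ k, Q i k * (lam ω * Q k j + c ω k * c ω j) := by
        simp [hsumω, hsmul, hk, hcvω']
    _ = lam ω * (Q * Q) i j + (Q *ᵥ c ω) i * c ω j := by
        simp only [mul_apply, mulVec, dotProduct, mul_add, Finset.sum_add_distrib,
          Finset.mul_sum, Finset.sum_mul]
        congr 1 <;> exact Finset.sum_congr rfl fun k _ => by ring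
    _ = lam ω * Q i j := by rw [hQ.eq, hlinω, Pi.zero_apply, zero_mul, add_zero]

theorem condExp_sum_mulVec_sq_ae_eq (hm : m ≤ mΩ) (hW : ∀ i, MemLp (fun ω => W ω i) 2 μ)
    {Q : Matrix (Fin p) (Fin p) ℝ} (hQ : IsIdempotentElem Q) (hQs : Q.IsSymm) {lam : Ω → ℝ}
    (hlin : ∀ᵐ ω ∂μ, Q *ᵥ (fun i => (μ[fun ω' => W ω' i | m]) ω) = 0)
    (hcv : ∀ᵐ ω ∂μ, Matrix.of (fun i j => condVarEntry mΩ μ m W i j ω) = lam ω • Q) :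
    μ[fun ω => ∑ j, ((Q *ᵥ W ω) j) ^ 2 | m] =ᵐ[μ] fun ω => lam ω * Q.trace := by
  have hsum : (fun ω => ∑ j, ((Q *ᵥ W ω) j) ^ 2)
      = ∑ k, fun ω => (Q *ᵥ W ω) k * W ω k := by
    ext ω
    simpa [dotProduct, sq] using mulVec_dotProduct_mulVec_self hQ hQs (W ω)
  have hdiag : ∀ k, Integrable (fun ω => (Q *ᵥ W ω) k * W ω k) μ := fun k => by
    simpa using integrable_mulVec_mul_mul (φ := fun _ => 1) Q
      (fun k j => by simp only [mul_one]; exact (hW k).integrable_mul (hW j)) k k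
  rw [hsum]
  filter_upwards [condExp_finsetSum (s := Finset.univ) (fun k _ => hdiag k) m,
    ae_all_iff.2 fun k => condExp_mulVec_mul_ae_eq hm hW hQ hlin hcv k k] with ω h hk
  simp [h, hk, trace, Finset.mul_sum]

theorem trace_mul_integral_mulVec_mul_mul_comp_eq (hmZ : mZ ≤ mΩ) (hm : m ≤ mΩ)
    {Y : Ω → ℝ} (hY : Measurable Y)
    (hCI : ∀ A : Set ℝ, MeasurableSet A →
      μ[fun ω => Set.indicator A (fun _ => (1 : ℝ)) (Y ω) | mZ]
        =ᵐ[μ] μ[fun ω => Set.indicator A (fun _ => (1 : ℝ)) (Y ω) | m])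
    (hWmZ : Measurable[mZ] W) (hW : ∀ i, MemLp (fun ω => W ω i) 2 μ)
    {Q : Matrix (Fin p) (Fin p) ℝ} (hQ : IsIdempotentElem Q) (hQs : Q.IsSymm) {lam : Ω → ℝ}
    (hlin : ∀ᵐ ω ∂μ, Q *ᵥ (fun i => (μ[fun ω' => W ω' i | m]) ω) = 0)
    (hcv : ∀ᵐ ω ∂μ, Matrix.of (fun i j => condVarEntry mΩ μ m W i j ω) = lam ω • Q)
    {ψ : ℝ → ℝ} (hψ : Measurable ψ)
    (hWψ : ∀ k j, Integrable (fun ω => W ω k * W ω j * ψ (Y ω)) μ)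
    (i j : Fin p) :
    Q.trace * ∫ ω, (Q *ᵥ W ω) i * W ω j * ψ (Y ω) ∂μ
      = Q i j * ∫ ω, (∑ j, ((Q *ᵥ W ω) j) ^ 2) * ψ (Y ω) ∂μ := by
  have hWW : ∀ k j, Integrable (fun ω => W ω k * W ω j * 1) μ := fun k j => by
    simp only [mul_one]; exact (hW k).integrable_mul (hW j)
  have hsq (ω : Ω) : ∑ j, ((Q *ᵥ W ω) j) ^ 2 = ∑ k, (Q *ᵥ W ω) k * W ω k * 1 := by
    simpa [dotProduct, sq] using mulVec_dotProduct_mulVec_self hQ hQs (W ω)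
  refine mul_integral_mul_comp_eq_of_condExp_ae_eq hmZ hm hY hCI (by fun_prop) (by fun_prop)
    (by simpa using integrable_mulVec_mul_mul Q hWW i j)
    (by simpa [hsq] using integrable_finsetSum _ fun k _ => integrable_mulVec_mul_mul Q hWW k k)
    (condExp_mulVec_mul_ae_eq hm hW hQ hlin hcv i j)
    (condExp_sum_mulVec_sq_ae_eq hm hW hQ hQs hlin hcv) hψ
    (integrable_mulVec_mul_mul Q hWψ i j) ?_
  simpa [hsq, Finset.sum_mul] using
    integrable_finsetSum _ fun k _ => integrable_mulVec_mul_mul Q hWψ k k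

end ConditionalMoments

/-- TF2 basic theorem: under the central subspace structure, the linearity condition and the
diagonal conditional variance condition, for every `ψ` the column space of
`M_ψ - λ*_ψ I` lies in `E_c`; equivalently, every vector of `E_c^⊥` is an eigenvector of
`M_ψ = E[Z Zᵀ ψ(Y)]` with eigenvalue `λ*_ψ = E[‖Q_c Z‖² ψ(Y)] / (p - d)`. -/
theorem tf2_psi_space_in_central_subspace
    {Ω : Type*} [mΩ : MeasurableSpace Ω] (μ : Measure Ω) [IsProbabilityMeasure μ]
    (p d : ℕ) (Z : Ω → (Fin p → ℝ)) (hZmeas : Measurable Z)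
    (hZint2 : ∀ i j, Integrable (fun ω => Z ω i * Z ω j) μ)
    (Y : Ω → ℝ) (hYmeas : Measurable Y)
    (Pc : Matrix (Fin p) (Fin p) ℝ) (hPcsymm : Pc.IsSymm) (hPcidem : Pc * Pc = Pc)
    (hPcrank : Pc.rank = d) (hdp : d < p)
    (mZ : MeasurableSpace Ω) (hmZ : mZ = MeasurableSpace.comap Z inferInstance)
    (m : MeasurableSpace Ω)
    (hm : m = MeasurableSpace.comap (fun ω => Pc.mulVec (Z ω)) inferInstance)
    -- (i) existence of the CS: `Y ⫫ Z | P_c Z`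
    (hCS : ∀ A : Set ℝ, MeasurableSet A →
      μ[fun ω => Set.indicator A (fun _ => (1 : ℝ)) (Y ω) | mZ]
        =ᵐ[μ] μ[fun ω => Set.indicator A (fun _ => (1 : ℝ)) (Y ω) | m])
    -- (ii) linearity condition
    (hlin : ∀ᵐ ω ∂μ, (1 - Pc).mulVec (fun i => (μ[fun ω' => Z ω' i | m]) ω) = 0)
    -- (iii) diagonal conditional variance condition
    (hDCV : ∃ lam : Ω → ℝ, ∀ᵐ ω ∂μ,
      (Matrix.of fun i j => condVarEntry mΩ μ m Z i j ω) = lam ω • (1 - Pc)) :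
    ∀ ψ : ℝ → ℝ, Measurable ψ →
      (∀ i j, Integrable (fun ω => Z ω i * Z ω j * ψ (Y ω)) μ) →
      ∀ Mψ : Matrix (Fin p) (Fin p) ℝ,
        Mψ = Matrix.of (fun i j => ∫ ω, Z ω i * Z ω j * ψ (Y ω) ∂μ) →
        ∀ lamψ : ℝ,
          lamψ = (∫ ω, (∑ j, ((1 - Pc).mulVec (Z ω) j) ^ 2) * ψ (Y ω) ∂μ) / ((p : ℝ) - d) →
          LinearMap.range (Mψ - lamψ • 1).mulVecLin ≤ LinearMap.range Pc.mulVecLin ∧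
            ∀ v : Fin p → ℝ, Pc.mulVec v = 0 → Mψ.mulVec v = lamψ • v := by
  intro ψ hψ hZZψ Mψ hMψ lamψ hlamψ
  obtain ⟨lam, hcv⟩ := hDCV
  have hpd : (p : ℝ) - d ≠ 0 := sub_ne_zero.2 (by exact_mod_cast hdp.ne')
  have htrace : (1 - Pc).trace = p - d := by
    rw [trace_sub, trace_one, trace_eq_rank_of_isIdempotentElem hPcidem, hPcrank, Fintype.card_fin]
  have hZmZ : Measurable[mZ, _] Z := hmZ ▸ comap_measurable Z
  have hmZle : mZ ≤ mΩ := hmZ ▸ hZmeas.comap_le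
  have hPcZ : Measurable[mΩ, _] fun ω => Pc *ᵥ Z ω := by fun_prop
  have hmle : m ≤ mΩ := hm ▸ hPcZ.comap_le
  have hZ2 : ∀ i, MemLp (fun ω => Z ω i) 2 μ := fun i =>
    (memLp_two_iff_integrable_sq (by fun_prop)).2 (by simpa [sq] using hZint2 i i)
  have hQM : (1 - Pc) * Mψ = lamψ • (1 - Pc) := by
    ext i j
    have h := trace_mul_integral_mulVec_mul_mul_comp_eq hmZle hmle hYmeas hCS hZmZ hZ2
      (IsIdempotentElem.one_sub hPcidem) (isSymm_one.sub hPcsymm) hlin hcv hψ hZZψ i j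
    rw [htrace] at h
    rw [hMψ, ← integral_mulVec_mul_mul _ hZZψ, Matrix.smul_apply, smul_eq_mul, hlamψ,
      div_mul_eq_mul_div, eq_div_iff hpd, mul_comm, h, mul_comm]
  have hMs : Mψ.IsSymm := IsSymm.ext fun i j => by
    simp only [hMψ, of_apply]
    exact integral_congr_ae (ae_of_all μ fun ω => by ring)
  exact ⟨range_mulVecLin_sub_smul_one_le hQM,
    fun v hv => mulVec_eq_smul_of_mulVec_eq_zero hMs hPcsymm hQM hv⟩
end

section
/- Let Z be a square-integrable random vector in R^p and Y a random variable satisfying the linearity condition Q_c E[Z|P_cZ] = 0 a.s., where P_c is the orthogonal projection onto the central subspace E_c. Then the column space of M_SIR = E[Z E[Z|Y]^T] equals E_c if and only if for every nonzero vector η ∈ E_c, the random variable E[η^T Z | Y] has nonzero variance. -/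
/-!
Write `g = E[Z | Y]`. Since `E[Z_i E[Z_j|Y]] = E[g_i g_j]`, the matrix `M_SIR` is the Gram matrix of
`g`, so it is positive semidefinite with `ηᵀ M_SIR η = Var(E[ηᵀZ | Y])`. If `P_c η = 0`, then
`ηᵀZ` is a function of `Z` whose conditional expectation given `P_c Z` vanishes by the linearity
condition; conditional independence of `Y` and `Z` given `P_c Z` then forces `E[ηᵀZ | Y] = 0`, so
`ker P_c ⊆ ker M_SIR`. For a positive semidefinite `M` and an orthogonal projection `P` with
`ker P ⊆ ker M`, the ranges agree exactly when `ηᵀ M η ≠ 0` on the nonzero vectors of `range P`.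
-/

open MeasureTheory Matrix

namespace Matrix

variable {n R : Type*} [Fintype n] [CommRing R]

theorem IsSymm.dotProduct_eq_zero_of_mulVec_eq_zero [DecidableEq n] {P : Matrix n n R}
    (hP : P.IsSymm) {y v : n → R} (hy : P *ᵥ y = 0) (hv : (1 - P) *ᵥ v = 0) : y ⬝ᵥ v = 0 := by
  rw [sub_mulVec, one_mulVec, sub_eq_zero] at hv
  rw [hv, dotProduct_mulVec, ← mulVec_transpose, hP.eq, hy, zero_dotProduct]

section

variable {M P : Matrix n n R}

theorem mul_eq_self_of_ker_le (hP : P * P = P)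
    (hker : LinearMap.ker P.mulVecLin ≤ LinearMap.ker M.mulVecLin) : M * P = M := by
  refine mulVec_injective (funext fun x => ?_)
  have hx : P *ᵥ (x - P *ᵥ x) = 0 := by
    rw [mulVec_sub, mulVec_mulVec, hP, sub_self]
  have := hker (show x - P *ᵥ x ∈ LinearMap.ker P.mulVecLin from hx)
  rw [LinearMap.mem_ker, mulVecLin_apply, mulVec_sub, sub_eq_zero] at this
  rw [← mulVec_mulVec, this]

theorem ker_mulVecLin_eq_of_ker_le (hP : P * P = P)
    (hker : LinearMap.ker P.mulVecLin ≤ LinearMap.ker M.mulVecLin)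
    (hpos : ∀ η : n → R, η ≠ 0 → P *ᵥ η = η → η ⬝ᵥ M *ᵥ η ≠ 0) :
    LinearMap.ker M.mulVecLin = LinearMap.ker P.mulVecLin := by
  refine le_antisymm (fun x hx => ?_) hker
  rw [LinearMap.mem_ker, mulVecLin_apply] at hx ⊢
  by_contra hPx
  refine hpos (P *ᵥ x) hPx (by rw [mulVec_mulVec, hP]) ?_
  rw [mulVec_mulVec, mul_eq_self_of_ker_le hP hker, hx, dotProduct_zero]

theorem range_mulVecLin_le_of_mul_eq_self (hM : M.IsSymm) (hPsymm : P.IsSymm)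
    (hMP : M * P = M) :
    LinearMap.range M.mulVecLin ≤ LinearMap.range P.mulVecLin := by
  have hPM : P * M = M := by
    simpa only [transpose_mul, hM.eq, hPsymm.eq] using congrArg transpose hMP
  rintro _ ⟨x, rfl⟩
  exact ⟨M *ᵥ x, by rw [mulVecLin_apply, mulVecLin_apply, mulVec_mulVec, hPM]⟩

end

theorem PosSemidef.range_mulVecLin_eq_iff {M P : Matrix n n ℝ} (hM : M.PosSemidef)
    (hPsymm : P.IsSymm) (hP : P * P = P)
    (hker : LinearMap.ker P.mulVecLin ≤ LinearMap.ker M.mulVecLin) :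
    LinearMap.range M.mulVecLin = LinearMap.range P.mulVecLin ↔
      ∀ η : n → ℝ, η ≠ 0 → P *ᵥ η = η → η ⬝ᵥ M *ᵥ η ≠ 0 := by
  have hMsymm : M.IsSymm := by
    simpa [IsSymm, IsHermitian, conjTranspose_eq_transpose_of_trivial] using hM.isHermitian
  constructor
  · rintro hrange η hη hPη hMη
    replace hMη : M *ᵥ η = 0 := (hM.dotProduct_mulVec_zero_iff η).mp (by simpa using hMη)
    obtain ⟨x, rfl⟩ : η ∈ LinearMap.range M.mulVecLin := hrange ▸ ⟨η, hPη⟩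
    refine hη (dotProduct_self_eq_zero.mp ?_)
    rw [mulVecLin_apply] at hMη ⊢
    rw [dotProduct_mulVec, ← mulVec_transpose, hMsymm.eq, hMη, zero_dotProduct]
  · intro hpos
    have hle := range_mulVecLin_le_of_mul_eq_self hMsymm hPsymm (mul_eq_self_of_ker_le hP hker)
    refine Submodule.eq_of_le_of_finrank_eq hle ?_
    have hrkM := LinearMap.finrank_range_add_finrank_ker M.mulVecLin
    have hrkP := LinearMap.finrank_range_add_finrank_ker P.mulVecLin
    rw [ker_mulVecLin_eq_of_ker_le hP hker hpos] at hrkM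
    omega

end Matrix

namespace MeasureTheory

noncomputable def sirMatrix {Ω ι : Type*} {mΩ : MeasurableSpace Ω} (μ : Measure Ω)
    (m : MeasurableSpace Ω) (Z : Ω → ι → ℝ) : Matrix ι ι ℝ :=
  Matrix.of fun i j => ∫ ω, Z ω i * μ[fun ω' => Z ω' j | m] ω ∂μ

variable {Ω ι : Type*} {m mΩ : MeasurableSpace Ω} {μ : Measure Ω} {Z : Ω → ι → ℝ}

theorem condExp_dotProduct [Fintype ι] (hZ : ∀ i, Integrable (fun ω => Z ω i) μ) (x : ι → ℝ) :
    μ[fun ω => x ⬝ᵥ Z ω | m] =ᵐ[μ] fun ω => x ⬝ᵥ fun i => μ[fun ω' => Z ω' i | m] ω := by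
  have h_sum : (fun ω => x ⬝ᵥ Z ω) = ∑ i, x i • fun ω => Z ω i := by
    ext ω; simp [dotProduct]
  rw [h_sum]
  refine (condExp_finsetSum (fun i _ => (hZ i).smul (x i)) m).trans ?_
  have h_smul := ae_all_iff.2 fun i => condExp_smul (μ := μ) (x i) (fun ω => Z ω i) m
  filter_upwards [h_smul] with ω hω
  simp [dotProduct, hω]

theorem memLp_dotProduct [Fintype ι] {p : ENNReal} (hZ : ∀ i, MemLp (fun ω => Z ω i) p μ)
    (x : ι → ℝ) :
    MemLp (fun ω => x ⬝ᵥ Z ω) p μ :=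
  memLp_finsetSum Finset.univ fun i _ => (hZ i).const_mul (x i)

variable [IsFiniteMeasure μ]

theorem integral_mul_condExp_eq_integral_condExp_mul_condExp {f g : Ω → ℝ} (hf : MemLp f 2 μ)
    (hg : MemLp g 2 μ) :
    ∫ ω, f ω * μ[g|m] ω ∂μ = ∫ ω, μ[f|m] ω * μ[g|m] ω ∂μ := by
  by_cases hm : m ≤ mΩ
  swap; · simp [condExp_of_not_le hm]
  have hpull : μ[μ[g|m] * f|m] =ᵐ[μ] μ[g|m] * μ[f|m] :=
    condExp_mul_of_stronglyMeasurable_left stronglyMeasurable_condExp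
      ((hg.condExp one_le_two).integrable_mul hf) (hf.integrable one_le_two)
  calc ∫ ω, f ω * μ[g|m] ω ∂μ = ∫ ω, μ[μ[g|m] * f|m] ω ∂μ := by
        rw [integral_condExp hm]; simp_rw [Pi.mul_apply, mul_comm]
    _ = ∫ ω, μ[f|m] ω * μ[g|m] ω ∂μ := by
        rw [integral_congr_ae hpull]; simp_rw [Pi.mul_apply, mul_comm]

theorem integral_mul_condExp_eq_integral_condExp_mul {f g : Ω → ℝ} (hf : MemLp f 2 μ)
    (hg : MemLp g 2 μ) :
    ∫ ω, f ω * μ[g|m] ω ∂μ = ∫ ω, μ[f|m] ω * g ω ∂μ := by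
  simp_rw [integral_mul_condExp_eq_integral_condExp_mul_condExp hf hg, mul_comm _ (g _),
    integral_mul_condExp_eq_integral_condExp_mul_condExp hg hf, mul_comm]

theorem condExp_comap_eq_zero_of_condExp_indicator_eq {β : Type*} [MeasurableSpace β]
    {mZ : MeasurableSpace Ω} {Y : Ω → β} (hY : Measurable[mΩ] Y) (hmZ : mZ ≤ mΩ) {W : Ω → ℝ}
    (hW : MemLp W 2 μ)    (hWZ : StronglyMeasurable[mZ] W) (hWm : μ[W|m] =ᵐ[μ] 0)
    (hind : ∀ B : Set β, MeasurableSet B →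
      μ[fun ω => B.indicator (fun _ => (1 : ℝ)) (Y ω) | mZ]
        =ᵐ[μ] μ[fun ω => B.indicator (fun _ => (1 : ℝ)) (Y ω) | m]) :
    μ[W | MeasurableSpace.comap Y inferInstance] =ᵐ[μ] 0 := by
  refine (ae_eq_condExp_of_forall_setIntegral_eq hY.comap_le (hW.integrable one_le_two)
    (g := fun _ => (0 : ℝ)) (fun _ _ _ => integrableOn_zero) (fun s hs _ => ?_)
    aestronglyMeasurable_const).symm
  obtain ⟨B, hB, rfl⟩ := hs
  have hindicator : (fun ω => B.indicator (fun _ => (1 : ℝ)) (Y ω)) = (Y ⁻¹' B).indicator 1 := by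
    ext ω; by_cases hω : Y ω ∈ B <;> simp [hω]
  have hind_B : μ[(Y ⁻¹' B).indicator 1|mZ] =ᵐ[μ] μ[(Y ⁻¹' B).indicator 1|m] :=
    hindicator ▸ hind B hB
  have hh : MemLp ((Y ⁻¹' B).indicator (1 : Ω → ℝ)) 2 μ := (memLp_const 1).indicator (hY hB)
  have hW_condExp : μ[W|mZ] = W := condExp_of_stronglyMeasurable hmZ hWZ (hW.integrable one_le_two)
  rw [integral_zero, eq_comm]
  calc ∫ ω in Y ⁻¹' B, W ω ∂μ = ∫ ω, W ω * (Y ⁻¹' B).indicator 1 ω ∂μ := by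
        rw [← integral_indicator (hY hB)]
        congr 1 with ω
        by_cases hω : ω ∈ Y ⁻¹' B <;> simp [hω]
    _ = ∫ ω, W ω * μ[(Y ⁻¹' B).indicator 1|mZ] ω ∂μ := by
        rw [integral_mul_condExp_eq_integral_condExp_mul hW hh, hW_condExp]
    _ = ∫ ω, W ω * μ[(Y ⁻¹' B).indicator 1|m] ω ∂μ :=
        integral_congr_ae (hind_B.mono fun ω hω => by simp only [hω])
    _ = 0 := by
        rw [integral_mul_condExp_eq_integral_condExp_mul hW hh, ← integral_zero Ω ℝ]
        exact integral_congr_ae (hWm.mono fun ω hω => by simp only [hω, Pi.zero_apply, zero_mul])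

theorem sirMatrix_isSymm (hZ : ∀ i, MemLp (fun ω => Z ω i) 2 μ) : (sirMatrix μ m Z).IsSymm :=
  IsSymm.ext fun i j => by
    simp only [sirMatrix, of_apply,
      integral_mul_condExp_eq_integral_condExp_mul_condExp (hZ _) (hZ _), mul_comm]

variable [Fintype ι]

theorem sirMatrix_mulVec (hZ : ∀ i, MemLp (fun ω => Z ω i) 2 μ) (y : ι → ℝ) :
    sirMatrix μ m Z *ᵥ y = fun i => ∫ ω, Z ω i * μ[fun ω' => y ⬝ᵥ Z ω' | m] ω ∂μ := by
  ext i
  have hint : ∀ j, Integrable (fun ω => Z ω i * μ[fun ω' => Z ω' j | m] ω) μ := fun j =>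
    (hZ i).integrable_mul ((hZ j).condExp one_le_two)
  calc (sirMatrix μ m Z *ᵥ y) i = ∑ j, ∫ ω, Z ω i * μ[fun ω' => Z ω' j | m] ω * y j ∂μ := by
        simp [mulVec, dotProduct, sirMatrix, integral_mul_const]
    _ = ∫ ω, Z ω i * (y ⬝ᵥ fun j => μ[fun ω' => Z ω' j | m] ω) ∂μ := by
        rw [← integral_finsetSum _ fun j _ => (hint j).mul_const (y j)]
        simp [dotProduct, Finset.mul_sum, mul_comm, mul_left_comm]
    _ = ∫ ω, Z ω i * μ[fun ω' => y ⬝ᵥ Z ω' | m] ω ∂μ :=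
        integral_congr_ae <|
          (condExp_dotProduct (m := m) (fun j => (hZ j).integrable one_le_two) y).mono
            fun ω hω => by simp only [hω]

theorem sirMatrix_mulVec_eq_zero (hZ : ∀ i, MemLp (fun ω => Z ω i) 2 μ) {y : ι → ℝ}
    (hy : μ[fun ω => y ⬝ᵥ Z ω | m] =ᵐ[μ] 0) : sirMatrix μ m Z *ᵥ y = 0 := by
  rw [sirMatrix_mulVec hZ]
  ext i
  simp [integral_congr_ae (hy.mono fun ω hω => by simp only [hω, Pi.zero_apply, mul_zero] :
    (fun ω => Z ω i * μ[fun ω' => y ⬝ᵥ Z ω' | m] ω) =ᵐ[μ] 0)]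

theorem dotProduct_sirMatrix_mulVec_self (hZ : ∀ i, MemLp (fun ω => Z ω i) 2 μ) (x : ι → ℝ) :
    x ⬝ᵥ sirMatrix μ m Z *ᵥ x = ∫ ω, μ[fun ω' => x ⬝ᵥ Z ω' | m] ω ^ 2 ∂μ := by
  have hint : ∀ i, Integrable (fun ω => Z ω i * μ[fun ω' => x ⬝ᵥ Z ω' | m] ω) μ := fun i =>
    (hZ i).integrable_mul ((memLp_dotProduct hZ x).condExp one_le_two)
  calc x ⬝ᵥ sirMatrix μ m Z *ᵥ x = ∫ ω, (x ⬝ᵥ Z ω) * μ[fun ω' => x ⬝ᵥ Z ω' | m] ω ∂μ := by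
        simp_rw [sirMatrix_mulVec hZ, dotProduct, ← integral_const_mul]
        refine (integral_finsetSum _ fun i _ => (hint i).const_mul (x i)).symm.trans ?_
        simp [dotProduct, Finset.sum_mul, mul_assoc]
    _ = ∫ ω, μ[fun ω' => x ⬝ᵥ Z ω' | m] ω ^ 2 ∂μ := by
        rw [integral_mul_condExp_eq_integral_condExp_mul_condExp (memLp_dotProduct hZ x)
          (memLp_dotProduct hZ x)]
        simp only [sq]

theorem sirMatrix_posSemidef (hZ : ∀ i, MemLp (fun ω => Z ω i) 2 μ) :
    (sirMatrix μ m Z).PosSemidef := by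
  refine .of_dotProduct_mulVec_nonneg ?_ fun x => ?_
  · simpa [IsHermitian, conjTranspose_eq_transpose_of_trivial] using (sirMatrix_isSymm hZ).eq
  · rw [star_trivial, dotProduct_sirMatrix_mulVec_self hZ]
    exact integral_nonneg fun ω => sq_nonneg _

theorem variance_condExp_dotProduct [IsProbabilityMeasure μ] (hm : m ≤ mΩ)
    (hZ : ∀ i, MemLp (fun ω => Z ω i) 2 μ) (hZ0 : ∀ i, ∫ ω, Z ω i ∂μ = 0) (x : ι → ℝ) :
    ProbabilityTheory.variance (μ[fun ω => x ⬝ᵥ Z ω | m]) μ = x ⬝ᵥ sirMatrix μ m Z *ᵥ x := by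
  have hmean : ∫ ω, μ[fun ω' => x ⬝ᵥ Z ω' | m] ω ∂μ = 0 := by
    rw [integral_condExp hm]
    simp only [dotProduct]
    rw [integral_finsetSum _ fun i _ => ((hZ i).integrable one_le_two).const_mul (x i)]
    simp [integral_const_mul, hZ0]
  rw [ProbabilityTheory.variance_eq_sub ((memLp_dotProduct hZ x).condExp one_le_two),
    dotProduct_sirMatrix_mulVec_self hZ, hmean]
  simp

end MeasureTheory

theorem sir_exhaustive_iff_general
    {Ω : Type*} [mΩ : MeasurableSpace Ω] (μ : Measure Ω) [IsProbabilityMeasure μ]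
    (p : ℕ) (Z : Ω → (Fin p → ℝ)) (hZmeas : Measurable Z)
    (hZint2 : ∀ i j, Integrable (fun ω => Z ω i * Z ω j) μ)
    (hZcent : ∀ i, ∫ ω, Z ω i ∂μ = 0)
    (Y : Ω → ℝ) (hYmeas : Measurable Y)
    (Pc : Matrix (Fin p) (Fin p) ℝ) (hPcsymm : Pc.IsSymm) (hPcidem : Pc * Pc = Pc)
    (mZ : MeasurableSpace Ω) (hmZ : mZ = MeasurableSpace.comap Z inferInstance)
    (m : MeasurableSpace Ω)
    (mY : MeasurableSpace Ω) (hmY : mY = MeasurableSpace.comap Y inferInstance)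
    -- existence of the CS: `Y ⫫ Z | P_c Z`
    (hCS : ∀ A : Set ℝ, MeasurableSet A →
      μ[fun ω => Set.indicator A (fun _ => (1 : ℝ)) (Y ω) | mZ]
        =ᵐ[μ] μ[fun ω => Set.indicator A (fun _ => (1 : ℝ)) (Y ω) | m])
    -- linearity condition
    (hlin : ∀ᵐ ω ∂μ, (1 - Pc).mulVec (fun i => (μ[fun ω' => Z ω' i | m]) ω) = 0)
    (MSIR : Matrix (Fin p) (Fin p) ℝ)
    (hMSIR : MSIR = Matrix.of (fun i j => ∫ ω, Z ω i * (μ[fun ω' => Z ω' j | mY]) ω ∂μ)) :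
    LinearMap.range MSIR.mulVecLin = LinearMap.range Pc.mulVecLin ↔
      ∀ η : Fin p → ℝ, η ≠ 0 → Pc.mulVec η = η →
        ProbabilityTheory.variance (μ[fun ω => ∑ i, η i * Z ω i | mY]) μ ≠ 0 := by
  have hmY_le : mY ≤ mΩ := hmY ▸ hYmeas.comap_le
  have hZ : ∀ i, MemLp (fun ω => Z ω i) 2 μ := fun i =>
    (memLp_two_iff_integrable_sq (f := fun ω => Z ω i)
      ((measurable_pi_apply i).comp hZmeas).aestronglyMeasurable).2
      (by simpa only [sq] using hZint2 i i)
  have hM : MSIR = sirMatrix μ mY Z := hMSIR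
  subst hM
  have hker : LinearMap.ker Pc.mulVecLin ≤ LinearMap.ker (sirMatrix μ mY Z).mulVecLin := by
    intro y (hy : Pc *ᵥ y = 0)
    refine sirMatrix_mulVec_eq_zero hZ ?_
    have hWm : μ[fun ω => y ⬝ᵥ Z ω | m] =ᵐ[μ] 0 :=
      (condExp_dotProduct (fun i => (hZ i).integrable one_le_two) y).trans <|
        hlin.mono fun ω hω => hPcsymm.dotProduct_eq_zero_of_mulVec_eq_zero hy hω
    have hWZ : StronglyMeasurable[mZ] fun ω => y ⬝ᵥ Z ω :=
      hmZ ▸ ((continuous_const.dotProduct continuous_id).measurable.comp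
        (comap_measurable Z)).stronglyMeasurable
    exact hmY ▸ condExp_comap_eq_zero_of_condExp_indicator_eq hYmeas (hmZ ▸ hZmeas.comap_le)
      (memLp_dotProduct hZ y) hWZ hWm hCS
  have hvar : ∀ η : Fin p → ℝ, ProbabilityTheory.variance (μ[fun ω => ∑ i, η i * Z ω i | mY]) μ
      = η ⬝ᵥ sirMatrix μ mY Z *ᵥ η := variance_condExp_dotProduct hmY_le hZ hZcent
  rw [(sirMatrix_posSemidef hZ).range_mulVecLin_eq_iff hPcsymm hPcidem hker]
  simp only [hvar]

/-- SIR exhaustivity: under the linearity condition, the column space of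
`M_SIR = E[Z E[Z|Y]ᵀ]` equals the central subspace `E_c` iff for every nonzero `η ∈ E_c`
the conditional expectation `E[ηᵀ Z | Y]` has nonzero variance. -/
theorem sir_exhaustive_iff
    {Ω : Type*} [mΩ : MeasurableSpace Ω] (μ : Measure Ω) [IsProbabilityMeasure μ]
    (p : ℕ) (Z : Ω → (Fin p → ℝ)) (hZmeas : Measurable Z)
    (hZint2 : ∀ i j, Integrable (fun ω => Z ω i * Z ω j) μ)
    (hZcent : ∀ i, ∫ ω, Z ω i ∂μ = 0)
    (Y : Ω → ℝ) (hYmeas : Measurable Y)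
    (Pc : Matrix (Fin p) (Fin p) ℝ) (hPcsymm : Pc.IsSymm) (hPcidem : Pc * Pc = Pc)
    (mZ : MeasurableSpace Ω) (hmZ : mZ = MeasurableSpace.comap Z inferInstance)
    (m : MeasurableSpace Ω)
    (hm : m = MeasurableSpace.comap (fun ω => Pc.mulVec (Z ω)) inferInstance)
    (mY : MeasurableSpace Ω) (hmY : mY = MeasurableSpace.comap Y inferInstance)
    -- existence of the CS: `Y ⫫ Z | P_c Z`
    (hCS : ∀ A : Set ℝ, MeasurableSet A →
      μ[fun ω => Set.indicator A (fun _ => (1 : ℝ)) (Y ω) | mZ]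
        =ᵐ[μ] μ[fun ω => Set.indicator A (fun _ => (1 : ℝ)) (Y ω) | m])
    -- linearity condition
    (hlin : ∀ᵐ ω ∂μ, (1 - Pc).mulVec (fun i => (μ[fun ω' => Z ω' i | m]) ω) = 0)
    (MSIR : Matrix (Fin p) (Fin p) ℝ)
    (hMSIR : MSIR = Matrix.of (fun i j => ∫ ω, Z ω i * (μ[fun ω' => Z ω' j | mY]) ω ∂μ)) :
    LinearMap.range MSIR.mulVecLin = LinearMap.range Pc.mulVecLin ↔
      ∀ η : Fin p → ℝ, η ≠ 0 → Pc.mulVec η = η →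
        ProbabilityTheory.variance (μ[fun ω => ∑ i, η i * Z ω i | mY]) μ ≠ 0 :=
  sir_exhaustive_iff_general (mΩ := mΩ) μ p Z hZmeas hZint2 hZcent Y hYmeas Pc hPcsymm hPcidem mZ
    hmZ m mY hmY hCS hlin MSIR hMSIR
end

section
/- Let M and N be d×d real matrices and α₀ > 0. If rank(N + αM) ≤ rank(N) for all α ∈ (0, α₀], then M(ker N) ⊆ im(N), i.e. M maps the kernel of N into the image of N. -/
/-!
Suppose `N x = 0` but `M x ∉ im N`. Pick `u₁, …, u_r` whose images `N uᵢ` form a basis of `im N`;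
then `M x, N u₁, …, N u_r` are linearly independent. For `α ≠ 0` the perturbed vectors
`M x = (N + α M)(α⁻¹ x)` and `(N + α M) uᵢ` all lie in `im (N + α M)`, and they depend continuously
on `α`. Linear independence is an open condition, so for small `α ≠ 0` they are still independent,
giving `rank (N + α M) ≥ rank N + 1`.
-/

open Module Submodule Filter Topology

theorem Matrix.mulVecLin_smul {R m n : Type*} [CommSemiring R] [Fintype n] (c : R)
    (M : Matrix m n R) : (c • M).mulVecLin = c • M.mulVecLin :=
  map_smul (mulVecBilin R R) c M

theorem LinearIndependent.card_le_finrank_of_forall_mem {K W ι : Type*} [DivisionRing K]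
    [AddCommGroup W] [Module K W] [Fintype ι] {p : Submodule K W} [Module.Finite K p]
    {v : ι → W} (hv : LinearIndependent K v) (hp : ∀ i, v i ∈ p) :
    Fintype.card ι ≤ finrank K p :=
  finrank_span_eq_card hv ▸ Submodule.finrank_mono (span_le.mpr (Set.range_subset_iff.mpr hp))

namespace LinearMap

theorem exists_linearIndependent_cons_apply {K V W : Type*} [DivisionRing K] [AddCommGroup V]
    [Module K V] [AddCommGroup W] [Module K W] [FiniteDimensional K W] {f g : V →ₗ[K] W} {x : V}
    (hgx : g x ∉ range f) :
    ∃ u : Fin (finrank K (range f)) → V, LinearIndependent K (Fin.cons (g x) (f ∘ u)) := by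
  let b := Module.finBasis K (range f)
  choose u hu using fun i ↦ mem_range.mp (b i).2
  have hfu : f ∘ u = (range f).subtype ∘ b := funext hu
  refine ⟨u, linearIndependent_finCons.mpr ⟨?_, fun hspan ↦ hgx ?_⟩⟩
  · rw [hfu]
    exact b.linearIndependent.map' _ (ker_subtype _)
  · exact span_le.mpr (Set.range_subset_iff.mpr fun i ↦ mem_range_self f (u i)) hspan

theorem eventually_finrank_range_lt_add_smul {𝕜 V W : Type*} [NontriviallyNormedField 𝕜]
    [CompleteSpace 𝕜] [AddCommGroup V] [Module 𝕜 V] [NormedAddCommGroup W] [NormedSpace 𝕜 W]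
    [FiniteDimensional 𝕜 W] {f g : V →ₗ[𝕜] W} {x : V} (hx : f x = 0) (hgx : g x ∉ range f) :
    ∀ᶠ α in 𝓝[≠] (0 : 𝕜), finrank 𝕜 (range f) < finrank 𝕜 (range (f + α • g)) := by
  obtain ⟨u, hu⟩ := exists_linearIndependent_cons_apply hgx
  let w : 𝕜 → Fin (finrank 𝕜 (range f) + 1) → W := fun α ↦
    Fin.cons (g x) (f ∘ u) + α • (Fin.cons (0 : W) (g ∘ u) : Fin _ → W)
  have hw : Continuous w := by fun_prop
  have hw0 : w 0 = Fin.cons (g x) (f ∘ u) := by simp [w]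
  have hli : ∀ᶠ α in 𝓝[≠] (0 : 𝕜), LinearIndependent 𝕜 (w α) :=
    nhdsWithin_le_nhds (hw.tendsto 0 (hw0 ▸ hu.eventually))
  filter_upwards [hli, self_mem_nhdsWithin] with α hα hα0
  have hmem : ∀ i, w α i ∈ range (f + α • g) := by
    refine Fin.cases ⟨α⁻¹ • x, ?_⟩ fun i ↦ ⟨u i, ?_⟩
    · simp [w, hx, smul_smul, inv_mul_cancel₀ hα0]
    · simp [w]
  simpa using hα.card_le_finrank_of_forall_mem hmem

end LinearMap

/-- If `rank (N + α M) ≤ rank N` for all small positive `α`, then `M` maps the kernel of `N`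
into the image of `N`. -/
theorem rank_perturbation_map_ker_le_range
    (d : ℕ) (M N : Matrix (Fin d) (Fin d) ℝ) (α₀ : ℝ) (hα₀ : 0 < α₀)
    (hrank : ∀ α : ℝ, α ∈ Set.Ioc 0 α₀ → (N + α • M).rank ≤ N.rank) :
    Submodule.map M.mulVecLin (LinearMap.ker N.mulVecLin) ≤ LinearMap.range N.mulVecLin := by
  rintro _ ⟨x, hx, rfl⟩
  by_contra hMx
  have hrank_lt : ∀ᶠ α in 𝓝[>] (0 : ℝ), N.rank < (N + α • M).rank := by
    have hperturb := LinearMap.eventually_finrank_range_lt_add_smul hx hMx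
    filter_upwards [nhdsWithin_mono _ (fun _ ↦ ne_of_gt) hperturb] with α hα
    rwa [Matrix.rank, Matrix.rank, Matrix.mulVecLin_add, Matrix.mulVecLin_smul]
  have hsmall : ∀ᶠ α in 𝓝[>] (0 : ℝ), α ∈ Set.Ioc 0 α₀ := Ioc_mem_nhdsGT hα₀
  obtain ⟨α, hα, hlt⟩ := (hsmall.and hrank_lt).exists
  exact (hrank α hα).not_gt hlt
end

section
/- Let M ⊆ R^{d×d} be a linear subspace consisting entirely of non-invertible symmetric matrices. Then there exists a nonzero vector u ∈ R^d such that u^T M u = 0 for every M ∈ M. -/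
/-!
Take `N ∈ M` of maximal rank `r` and diagonalise it orthogonally, `Uᵀ N U = diagonal λ`. Since
`det N = 0`, some `λ i` vanishes; `u` is the `i`-th column of `U`. For `A ∈ M` and
`A' = Uᵀ A U`, every `diagonal λ + t • A'` has rank at most `r`, so its principal minor on the
support of `λ` together with `i`, of size `r + 1`, vanishes. Row `i` of that minor is `t` times
row `i` of `A'`; dividing it by `t` and letting `t → 0` shows that the determinant
`A' i i * ∏_{j ≠ i} λ j = u ⬝ᵥ A u * ∏_{j ≠ i} λ j` vanishes.
-/

open Matrix

namespace Matrix

theorem exists_mem_forall_rank_le {m n R : Type*} [Fintype n] [CommRing R]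
    [StrongRankCondition R] {s : Set (Matrix m n R)} (hs : s.Nonempty) :
    ∃ N ∈ s, ∀ A ∈ s, A.rank ≤ N.rank := by
  have hbdd : BddAbove (rank '' s) :=
    ⟨Fintype.card n, Set.forall_mem_image.2 fun A _ => A.rank_le_card_width⟩
  obtain ⟨N, hN, hNr⟩ := Nat.sSup_mem (hs.image rank) hbdd
  exact ⟨N, hN, fun A hA => hNr ▸ le_csSup hbdd ⟨A, hA, rfl⟩⟩

variable {n : Type*} [Fintype n] [DecidableEq n]

theorem det_updateRow_diagonal {R : Type*} [CommRing R] (μ : n → R) (i : n) (b : n → R) :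
    ((diagonal μ).updateRow i b).det = b i * ∏ j ∈ Finset.univ.erase i, μ j := by
  rw [← det_transpose, ← updateCol_transpose, diagonal_transpose, ← cramer_apply,
    cramer_eq_adjugate_mulVec, adjugate_diagonal, mulVec_diagonal, mul_comm]

theorem det_eq_zero_of_rank_lt {K : Type*} [Field K] {A : Matrix n n K}
    (h : A.rank < Fintype.card n) : A.det = 0 := by
  by_contra hdet
  exact h.ne (A.rank_of_isUnit ((isUnit_iff_isUnit_det A).2 (Ne.isUnit hdet)))

theorem apply_self_eq_zero_of_det_diagonal_add_smul_eq_zero {μ : n → ℝ} {B : Matrix n n ℝ}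
    {i : n} (hμi : μ i = 0) (hμ : ∀ j ≠ i, μ j ≠ 0)
    (hdet : ∀ t : ℝ, (diagonal μ + t • B).det = 0) : B i i = 0 := by
  set C : ℝ → Matrix n n ℝ := fun t => (diagonal μ + t • B).updateRow i (B i)
  have hrow : ∀ t, diagonal μ + t • B = (C t).updateRow i (t • B i) := by
    intro t
    ext j k
    rcases eq_or_ne j i with rfl | hj
    · simp [diagonal_apply, hμi]
    · simp [C, hj]
  have hC : ∀ t ≠ 0, (C t).det = 0 := by
    intro t ht
    have := hdet t
    rw [hrow, det_updateRow_smul, updateRow_idem] at this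
    exact (mul_eq_zero.1 this).resolve_left ht
  have hcont : Continuous fun t => (C t).det := by
    fun_prop
  have hC0 : (C 0).det = 0 :=
    congrFun (hcont.ext_on (dense_compl_singleton 0) continuous_const hC) 0
  rw [show C 0 = (diagonal μ).updateRow i (B i) by simp [C], det_updateRow_diagonal] at hC0
  exact (mul_eq_zero.1 hC0).resolve_right
    (Finset.prod_ne_zero_iff.2 fun j hj => hμ j (Finset.ne_of_mem_erase hj))

theorem apply_self_eq_zero_of_rank_diagonal_add_smul_le {μ : n → ℝ} {A : Matrix n n ℝ} {i : n}
    (hμi : μ i = 0) (hrank : ∀ t : ℝ, (diagonal μ + t • A).rank ≤ (diagonal μ).rank) :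
    A i i = 0 := by
  let J := {j // μ j ≠ 0 ∨ j = i}
  let e : J → n := Subtype.val
  have hcard : Fintype.card J = (diagonal μ).rank + 1 := by
    rw [rank_diagonal, Fintype.card_subtype_or_disjoint _ _ ?_, Fintype.card_subtype_eq]
    exact Pi.disjoint_iff.2 fun _ => Prop.disjoint_iff.2 fun ⟨h, hj⟩ => h (hj ▸ hμi)
  have hsub : ∀ t : ℝ,
      (diagonal μ + t • A).submatrix e e = diagonal (μ ∘ e) + t • A.submatrix e e := by
    intro t
    ext j k
    simp [e, diagonal_apply, Subtype.val_inj]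
  have hdet : ∀ t : ℝ, (diagonal (μ ∘ e) + t • A.submatrix e e).det = 0 := by
    intro t
    rw [← hsub]
    refine det_eq_zero_of_rank_lt ?_
    rw [hcard]
    exact Nat.lt_succ_of_le ((rank_submatrix_le _ _ _).trans (hrank t))
  exact apply_self_eq_zero_of_det_diagonal_add_smul_eq_zero (i := ⟨i, Or.inr rfl⟩) hμi
    (fun j hj => j.2.resolve_right fun h => hj (Subtype.ext h)) hdet

theorem IsSymm.exists_forall_dotProduct_mulVec_eq_zero_of_rank_add_smul_le {N : Matrix n n ℝ}
    (hN : N.IsSymm) (hdet : N.det = 0) :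
    ∃ u ≠ 0, ∀ A : Matrix n n ℝ, (∀ t : ℝ, (N + t • A).rank ≤ N.rank) → u ⬝ᵥ A *ᵥ u = 0 := by
  have hH : N.IsHermitian := by
    rwa [IsHermitian, conjTranspose_eq_transpose_of_trivial]
  set U : Matrix n n ℝ := ↑hH.eigenvectorUnitary
  have hU : IsUnit U.det := UnitaryGroup.det_isUnit _
  have hU' : IsUnit (star U).det := UnitaryGroup.det_isUnit (star hH.eigenvectorUnitary)
  have hdiag : diagonal hH.eigenvalues = star U * N * U := by
    simpa using hH.conjStarAlgAut_star_eigenvectorUnitary.symm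
  obtain ⟨i, hi⟩ : ∃ i, hH.eigenvalues i = 0 := by
    simpa [hH.det_eq_prod_eigenvalues, Finset.prod_eq_zero_iff] using hdet
  refine ⟨U.col i, fun h => hU.ne_zero (det_eq_zero_of_column_eq_zero i fun j => congrFun h j),
    fun A hA => ?_⟩
  have hrank : ∀ t : ℝ, (diagonal hH.eigenvalues + t • (star U * A * U)).rank ≤
      (diagonal hH.eigenvalues).rank := by
    intro t
    rw [hdiag, show star U * N * U + t • (star U * A * U) = star U * (N + t • A) * U by
      simp only [Matrix.mul_add, Matrix.add_mul, Matrix.mul_smul, Matrix.smul_mul],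
      rank_mul_eq_left_of_isUnit_det _ _ hU, rank_mul_eq_left_of_isUnit_det _ _ hU,
      rank_mul_eq_right_of_isUnit_det _ _ hU', rank_mul_eq_right_of_isUnit_det _ _ hU']
    exact hA t
  rw [← apply_self_eq_zero_of_rank_diagonal_add_smul_le hi hrank, dotProduct_mulVec]
  rfl

end Matrix

/-- A linear subspace of real symmetric `d × d` matrices consisting entirely of singular
matrices admits a common isotropic vector. -/
theorem singular_symmetric_subspace_common_isotropic
    (d : ℕ) (M : Submodule ℝ (Matrix (Fin d) (Fin d) ℝ))
    (hsym : ∀ A ∈ M, A.IsSymm) (hsing : ∀ A ∈ M, A.det = 0) :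
    ∃ u : Fin d → ℝ, u ≠ 0 ∧ ∀ A ∈ M, u ⬝ᵥ A.mulVec u = 0 := by
  obtain ⟨N, hNM, hmax⟩ := exists_mem_forall_rank_le M.nonempty
  obtain ⟨u, hu, hiso⟩ :=
    (hsym N hNM).exists_forall_dotProduct_mulVec_eq_zero_of_rank_add_smul_le (hsing N hNM)
  exact ⟨u, hu, fun A hA => hiso A fun t => hmax _ (M.add_mem hNM (M.smul_mem t hA))⟩
end

section
/- Let M ⊆ R^{d×d} be a linear subspace of symmetric matrices such that for every nonzero η ∈ R^d there exists N ∈ M with η^T N η ≠ 0. Then M contains an invertible matrix. -/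
/-!
Suppose every matrix of `M` is singular and take `N ∈ M` of maximal rank `r`, with `N η = 0`,
`η ≠ 0`, and `A ∈ M` with `ηᵀ A η ≠ 0`. Since `N` is symmetric, its quadratic form is
nondegenerate on its range, and `η` is orthogonal to that range. In a basis of the range
completed by `η`, the Gram matrix of `N + t A` is `[[B + t A₁₁, t A₁₂], [t A₂₁, t ηᵀAη]]` with
`B` invertible; its determinant is `t q(t)` with `q(0) = det B · ηᵀAη ≠ 0`. Hence for small
`t ≠ 0` the matrix `N + t A ∈ M` has rank at least `r + 1`, a contradiction.
-/

open Matrix Topology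

section Symmetric

variable {n R : Type*} [Fintype n]

theorem Matrix.IsSymm.dotProduct_mulVec_comm [CommSemiring R] {S : Matrix n n R} (hS : S.IsSymm)
    (x y : n → R) : x ⬝ᵥ S *ᵥ y = y ⬝ᵥ S *ᵥ x := by
  rw [dotProduct_mulVec, ← mulVec_transpose, hS, dotProduct_comm]

variable [Field R] [LinearOrder R] [IsStrictOrderedRing R]

theorem Matrix.IsSymm.eq_zero_of_mem_range_of_forall_dotProduct_mulVec_eq_zero
    {S : Matrix n n R} (hS : S.IsSymm) {w : n → R} (hw : w ∈ LinearMap.range S.mulVecLin)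
    (h : ∀ z ∈ LinearMap.range S.mulVecLin, z ⬝ᵥ S *ᵥ w = 0) : w = 0 := by
  obtain ⟨y, rfl⟩ := hw
  rw [mulVecLin_apply] at h ⊢
  have hSw : S *ᵥ (S *ᵥ y) = 0 := dotProduct_self_eq_zero.1 (h _ ⟨S *ᵥ y, rfl⟩)
  apply dotProduct_self_eq_zero.1
  calc S *ᵥ y ⬝ᵥ S *ᵥ y = y ⬝ᵥ S *ᵥ (S *ᵥ y) := hS.dotProduct_mulVec_comm _ _
    _ = 0 := by rw [hSw, dotProduct_zero]

theorem Matrix.IsSymm.det_basis_gram_ne_zero {ι : Type*} [Fintype ι] [DecidableEq ι]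
    {S : Matrix n n R} (hS : S.IsSymm) (b : Module.Basis ι R (LinearMap.range S.mulVecLin)) :
    (of (fun i => (b i : n → R)) * S * (of fun i => (b i : n → R))ᵀ).det ≠ 0 := by
  set P : Matrix ι n R := of fun i => (b i : n → R)
  rw [Ne, ← exists_mulVec_eq_zero_iff]
  rintro ⟨x, hx0, hx⟩
  set w : n → R := Pᵀ *ᵥ x
  have hw : w = b.equivFun.symm x := by
    simp only [w, P, mulVec_transpose, vecMul_eq_sum, b.equivFun_symm_apply]
    push_cast
    rfl
  have hb : ∀ i, (b i : n → R) ⬝ᵥ S *ᵥ w = 0 := fun i => by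
    have := congrFun hx i
    rwa [← mulVec_mulVec, ← mulVec_mulVec] at this
  have horth : ∀ z ∈ LinearMap.range S.mulVecLin, z ⬝ᵥ S *ᵥ w = 0 := by
    intro z hz
    obtain ⟨c, rfl⟩ : ∃ c, (b.equivFun.symm c : n → R) = z := ⟨b.equivFun ⟨z, hz⟩, by simp⟩
    simp [b.equivFun_symm_apply, sum_dotProduct, hb]
  have hw0 : (b.equivFun.symm x : n → R) = 0 :=
    hw ▸ hS.eq_zero_of_mem_range_of_forall_dotProduct_mulVec_eq_zero
      (hw ▸ Submodule.coe_mem _) horth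
  exact hx0 (b.equivFun.symm.map_eq_zero_iff.1 (Submodule.coe_eq_zero.1 hw0))

end Symmetric

theorem Matrix.card_le_rank_of_det_mul_mul_ne_zero {m n R : Type*} [Fintype m] [Fintype n]
    [DecidableEq m] [Field R] (X : Matrix m n R) (S : Matrix n n R) (Y : Matrix n m R)
    (h : (X * S * Y).det ≠ 0) : Fintype.card m ≤ S.rank :=
  calc Fintype.card m = (X * S * Y).rank :=
        (rank_of_isUnit _ ((isUnit_iff_isUnit_det _).2 h.isUnit)).symm
    _ ≤ (X * S).rank := rank_mul_le_left _ _
    _ ≤ S.rank := rank_mul_le_right _ _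

theorem Matrix.exists_mem_forall_rank_le_s9 {m n R : Type*} [Fintype n] [Field R]
    {s : Set (Matrix m n R)} (hs : s.Nonempty) : ∃ N ∈ s, ∀ A ∈ s, A.rank ≤ N.rank := by
  have hfin : (rank '' s).Finite := (Set.finite_Iic (Fintype.card n)).subset <| by
    rintro _ ⟨A, -, rfl⟩
    exact A.rank_le_card_width
  obtain ⟨_, ⟨N, hN, rfl⟩, hmax⟩ := Set.exists_max_image _ id hfin (hs.image _)
  exact ⟨N, hN, fun A hA => hmax _ ⟨A, hA, rfl⟩⟩

theorem Matrix.exists_det_fromBlocks_zero_add_smul_ne_zero {m n : Type*} [Fintype m] [Fintype n]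
    [DecidableEq m] [DecidableEq n] {B : Matrix n n ℝ} (hB : B.det ≠ 0)
    (G : Matrix (n ⊕ m) (n ⊕ m) ℝ) (hG : G.toBlocks₂₂.det ≠ 0) :
    ∃ t : ℝ, (fromBlocks B 0 0 0 + t • G).det ≠ 0 := by
  -- `Q t` is `fromBlocks B 0 0 0 + t • G` with `t` divided out of its last block row.
  let Q : ℝ → Matrix (n ⊕ m) (n ⊕ m) ℝ := fun t =>
    fromBlocks (B + t • G.toBlocks₁₁) (t • G.toBlocks₁₂) G.toBlocks₂₁ G.toBlocks₂₂
  have hdet : ∀ t : ℝ, (fromBlocks B 0 0 0 + t • G).det = t ^ Fintype.card m * (Q t).det := by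
    intro t
    have hfactor : fromBlocks B 0 0 0 + t • G = fromBlocks 1 0 0 (t • 1) * Q t := by
      conv_lhs => rw [← fromBlocks_toBlocks G]
      simp [Q, fromBlocks_smul, fromBlocks_add, fromBlocks_multiply]
    rw [hfactor, det_mul, det_fromBlocks_zero₁₂, det_smul, det_one, det_one, one_mul, mul_one]
  have hQ0 : (Q 0).det ≠ 0 := by
    simpa [Q, det_fromBlocks_zero₁₂] using mul_ne_zero hB hG
  have hQ : Continuous fun t => (Q t).det := by fun_prop
  obtain ⟨t, hQt, ht⟩ : ∃ t : ℝ, (Q t).det ≠ 0 ∧ t ≠ 0 :=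
    (((hQ.continuousAt.eventually_ne hQ0).filter_mono nhdsWithin_le_nhds).and
      (self_mem_nhdsWithin : ∀ᶠ t in 𝓝[≠] (0 : ℝ), t ≠ 0)).exists
  exact ⟨t, by rw [hdet]; exact mul_ne_zero (pow_ne_zero _ ht) hQt⟩

theorem Matrix.IsSymm.exists_rank_lt_rank_add_smul {n : Type*} [Fintype n] [DecidableEq n]
    {S A : Matrix n n ℝ} (hS : S.IsSymm) {η : n → ℝ} (hη : S *ᵥ η = 0)
    (hA : η ⬝ᵥ A *ᵥ η ≠ 0) : ∃ t : ℝ, S.rank < (S + t • A).rank := by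
  let b := Module.finBasis ℝ (LinearMap.range S.mulVecLin)
  let P : Matrix (Fin S.rank) n ℝ := of fun i => (b i : n → ℝ)
  let E : Matrix Unit n ℝ := replicateRow Unit η
  let X := fromRows P E
  have hSE : S * Eᵀ = 0 := by
    ext i j; simpa [E, mul_apply, mulVec, dotProduct] using congrFun hη i
  have hES : E * S = 0 := by
    rw [← transpose_transpose (E * S), transpose_mul, hS, hSE, transpose_zero]
  have hgram : X * S * Xᵀ = Matrix.fromBlocks (P * S * Pᵀ) 0 0 0 := by
    rw [transpose_fromRows, fromRows_mul, fromRows_mul_fromCols, Matrix.mul_assoc P S Eᵀ, hSE, hES,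
      Matrix.mul_zero, Matrix.zero_mul, Matrix.zero_mul]
  have h22 : (X * A * Xᵀ).toBlocks₂₂.det = η ⬝ᵥ A *ᵥ η := by
    rw [transpose_fromRows, fromRows_mul, fromRows_mul_fromCols, toBlocks_fromBlocks₂₂, det_unique,
      dotProduct_mulVec]
    simp [E, mul_apply, dotProduct, vecMul]
  obtain ⟨t, ht⟩ := exists_det_fromBlocks_zero_add_smul_ne_zero
    (hS.det_basis_gram_ne_zero b) (X * A * Xᵀ) (h22 ▸ hA)
  refine ⟨t, ?_⟩
  have := card_le_rank_of_det_mul_mul_ne_zero X (S + t • A) Xᵀ <| by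
    rwa [Matrix.mul_add, Matrix.add_mul, hgram, Matrix.mul_smul, Matrix.smul_mul]
  simpa using this

/-- A linear subspace of real symmetric `d × d` matrices with no common isotropic vector
contains an invertible matrix. -/
theorem symmetric_subspace_no_common_isotropic_contains_invertible
    (d : ℕ) (M : Submodule ℝ (Matrix (Fin d) (Fin d) ℝ))
    (hsym : ∀ A ∈ M, A.IsSymm)
    (h : ∀ η : Fin d → ℝ, η ≠ 0 → ∃ N ∈ M, η ⬝ᵥ N.mulVec η ≠ 0) :
    ∃ N ∈ M, N.det ≠ 0 := by
  by_contra! hsing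
  obtain ⟨N, hNM, hmax⟩ :=
    exists_mem_forall_rank_le_s9 (s := (M : Set (Matrix (Fin d) (Fin d) ℝ))) ⟨0, M.zero_mem⟩
  obtain ⟨η, hη0, hNη⟩ := exists_mulVec_eq_zero_iff.2 (hsing N hNM)
  obtain ⟨A, hAM, hA⟩ := h η hη0
  obtain ⟨t, ht⟩ := (hsym N hNM).exists_rank_lt_rank_add_smul hNη hA
  exact (hmax _ (M.add_mem hNM (M.smul_mem t hAM))).not_gt ht
end

section
/- Let E and E' be subspaces of R^p with orthogonal projections P and P', let R be the orthogonal projection onto E ∩ E', and let g, h : R^p → R be measurable functions with g(Px) = h(P'x) for Lebesgue-almost every x in a ball B(0, r). Then there exists a measurable function f such that g(Px) = f(Rx) for almost every x ∈ B(0, r). -/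
open MeasureTheory Metric Set RealInnerProductSpace

/-!
Write `u x = g (P x)` and `v x = h (P' x)`. Then `u` is invariant under translations by
`ker P` and `v` under translations by `ker P'`, and `u = v` a.e. on the ball. Since these are
orthogonal projections, `ker R = (E ∩ E')ᗮ = ker P + ker P'`. Hence, for `w = a + b` with
`a ∈ ker P`, `b ∈ ker P'`, `u (x + a + b) = u (x + b) = v (x + b) = v x = u x` for a.e. `x`,
provided `x + b` stays in the ball; cutting `w` into `n` small pieces and walking along the
segment from `x` to `x + w` shows that `u (x + w) = u x` for a.e. `x` with `x, x + w` in the ball.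
By Fubini, for a.e. `x` the function `u` is a.e. equal to `u x` on the slice of the ball through
`x` parallel to `ker R`, so the average of `u` over that slice, a measurable function of `R x`,
equals `u x`.
-/

section TranslationInvariance

variable {E β : Type*} [NormedAddCommGroup E] [NormedSpace ℝ E] [MeasurableSpace E]
  [BorelSpace E] {μ : Measure E} [μ.IsAddRightInvariant]
  {U : Set E} {u v : E → β} {K K' : Submodule ℝ E}

lemma ae_add_add_eq_of_ae_eqOn (hu : ∀ x, ∀ a ∈ K, u (x + a) = u x)
    (hv : ∀ x, ∀ b ∈ K', v (x + b) = v x) (huv : ∀ᵐ x ∂μ, x ∈ U → u x = v x)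
    {a b : E} (ha : a ∈ K) (hb : b ∈ K') :
    ∀ᵐ x ∂μ, x ∈ U → x + b ∈ U → u (x + (a + b)) = u x := by
  have huv_b : ∀ᵐ x ∂μ, x + b ∈ U → u (x + b) = v (x + b) :=
    (measurePreserving_add_right μ b).quasiMeasurePreserving.ae huv
  filter_upwards [huv, huv_b] with x hx hxb hxU hxbU
  calc u (x + (a + b)) = u (x + b + a) := by rw [add_comm a, add_assoc]
    _ = u (x + b) := hu _ a ha
    _ = v (x + b) := hxb hxbU
    _ = v x := hv x b hb
    _ = u x := (hx hxU).symm

lemma ae_add_eq_of_mem_sup (hU : IsOpen U) (hUc : Convex ℝ U)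
    (hu : ∀ x, ∀ a ∈ K, u (x + a) = u x) (hv : ∀ x, ∀ b ∈ K', v (x + b) = v x)
    (huv : ∀ᵐ x ∂μ, x ∈ U → u x = v x) {w : E} (hw : w ∈ K ⊔ K') :
    ∀ᵐ x ∂μ, x ∈ U → x + w ∈ U → u (x + w) = u x := by
  obtain ⟨a, ha, b, hb, rfl⟩ := Submodule.mem_sup.mp hw
  have hsteps : ∀ᵐ x ∂μ, ∀ n k : ℕ, x + (k / n : ℝ) • (a + b) ∈ U →
      x + (k / n : ℝ) • (a + b) + (n : ℝ)⁻¹ • b ∈ U →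
      u (x + (k / n : ℝ) • (a + b) + ((n : ℝ)⁻¹ • a + (n : ℝ)⁻¹ • b)) =
        u (x + (k / n : ℝ) • (a + b)) := by
    refine ae_all_iff.2 fun n ↦ ae_all_iff.2 fun k ↦ ?_
    exact (measurePreserving_add_right μ _).quasiMeasurePreserving.ae
      (ae_add_add_eq_of_ae_eqOn hu hv huv (K.smul_mem _ ha) (K'.smul_mem _ hb))
  filter_upwards [hsteps] with x hx hxU hxwU
  have hSU : (fun θ : ℝ ↦ x + θ • (a + b)) '' Icc 0 1 ⊆ U := by
    rintro _ ⟨θ, hθ, rfl⟩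
    exact hUc.add_smul_mem hxU (by simpa using hxwU) hθ
  obtain ⟨δ, hδ, hδU⟩ := (isCompact_Icc.image (by fun_prop)).exists_thickening_subset_open hU hSU
  obtain ⟨n, hn⟩ := exists_nat_gt (‖b‖ / δ)
  have hn0 : (0 : ℝ) < n := (div_nonneg (norm_nonneg b) hδ.le).trans_lt hn
  have hchain : ∀ k ≤ n, u (x + (k / n : ℝ) • (a + b)) = u x := by
    intro k hk
    induction k with
    | zero => simp
    | succ k ih =>
      have hθ : (k / n : ℝ) ∈ Icc 0 1 :=
        ⟨by positivity, div_le_one_of_le₀ (by exact_mod_cast (Nat.le_succ k).trans hk) hn0.le⟩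
      have hy : x + (k / n : ℝ) • (a + b) ∈ U := hSU ⟨_, hθ, rfl⟩
      have hyb : x + (k / n : ℝ) • (a + b) + (n : ℝ)⁻¹ • b ∈ U := by
        refine hδU (mem_thickening_iff.2 ⟨_, ⟨_, hθ, rfl⟩, ?_⟩)
        rw [dist_eq_norm, add_sub_cancel_left, norm_smul, norm_inv, Real.norm_natCast,
          inv_mul_lt_iff₀ hn0]
        exact (div_lt_iff₀ hδ).1 hn
      rw [← ih (Nat.le_of_succ_le hk), ← hx n k hy hyb]
      congr 1
      rw [← smul_add, add_assoc, ← add_smul]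
      push_cast
      congr 2
      ring
  simpa [hn0.ne'] using hchain n le_rfl

end TranslationInvariance

section SliceAverage

variable {E : Type*} [NormedAddCommGroup E] [NormedSpace ℝ E]

/-- The truncation `‖R t - y‖ < 1` gives the slice finite measure, and is centred at `y` so that
`x ∈ slice R U (R x)` for `x ∈ U`. -/
def slice (R : E →L[ℝ] E) (U : Set E) (y : E) : Set E := {t | y + (t - R t) ∈ U ∧ ‖R t - y‖ < 1}

variable {R : E →L[ℝ] E} {U : Set E}

lemma isOpen_slice (hU : IsOpen U) (y : E) : IsOpen (slice R U y) :=
  (hU.preimage (by fun_prop : Continuous fun t ↦ y + (t - R t))).inter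
    (isOpen_lt (f := fun t ↦ ‖R t - y‖) (by fun_prop) continuous_const)

lemma slice_subset_closedBall {M : ℝ} (hM : ∀ z ∈ U, ‖z‖ ≤ M) (y : E) :
    slice R U y ⊆ closedBall 0 (M + 1) := by
  rintro t ⟨htU, htR⟩
  rw [mem_closedBall_zero_iff]
  calc ‖t‖ = ‖(y + (t - R t)) + (R t - y)‖ := by congr 1; abel
    _ ≤ M + 1 := (norm_add_le _ _).trans (add_le_add (hM _ htU) htR.le)

variable [FiniteDimensional ℝ E] [MeasurableSpace E] [BorelSpace E]

lemma measurableSet_slice (hU : MeasurableSet U) :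
    MeasurableSet {q : E × E | q.2 ∈ slice R U q.1} :=
  ((by fun_prop : Continuous fun q : E × E ↦ q.1 + (q.2 - R q.2)).measurable hU).inter
    (measurableSet_lt (f := fun q : E × E ↦ ‖R q.2 - q.1‖) (by fun_prop) measurable_const)

noncomputable def sliceAverage (μ : Measure E) (R : E →L[ℝ] E) (U : Set E) (u : E → ℝ)
    (y : E) : ℝ :=
  ⨍ t in slice R U y, u (y + (t - R t)) ∂μ

variable {μ : Measure E} [μ.IsAddHaarMeasure]

lemma measurable_sliceAverage (hU : MeasurableSet U) {u : E → ℝ} (hu : Measurable u) :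
    Measurable (sliceAverage μ R U u) := by
  have hS := measurableSet_slice (R := R) hU
  have hint : Measurable fun y ↦ ∫ t in slice R U y, u (y + (t - R t)) ∂μ := by
    have hF : Measurable fun q : E × E ↦ u (q.1 + (q.2 - R q.2)) :=
      hu.comp (by fun_prop : Continuous fun q : E × E ↦ q.1 + (q.2 - R q.2)).measurable
    have h := (hF.indicator hS).stronglyMeasurable.integral_prod_right' (ν := μ)
    convert h.measurable using 2 with y
    exact (integral_indicator (measurable_prodMk_left hS)).symm
  have hvol : Measurable fun y ↦ μ.real (slice R U y) :=
    (measurable_measure_prodMk_left hS).ennreal_toReal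
  unfold sliceAverage
  simp_rw [setAverage_eq, smul_eq_mul]
  exact hvol.inv.mul hint

lemma sliceAverage_apply_eq (hU : IsOpen U) (hUb : Bornology.IsBounded U) {u : E → ℝ}
    {x : E} (hx : x ∈ U) (h : ∀ᵐ t ∂μ, x + (t - R t) ∈ U → u (x + (t - R t)) = u x) :
    sliceAverage μ R U u (R x) = u x := by
  have hslice : ∀ᵐ t ∂μ, t ∈ slice R U (R x) → u (R x + (t - R t)) = u x := by
    filter_upwards [(measurePreserving_sub_right μ x).quasiMeasurePreserving.ae h]
      with t ht hts
    have hRx : x + (t - x - R (t - x)) = R x + (t - R t) := by rw [map_sub]; abel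
    rw [hRx] at ht
    exact ht hts.1
  have hpos : μ (slice R U (R x)) ≠ 0 :=
    ((isOpen_slice hU _).measure_pos μ ⟨x, by simpa [slice] using hx⟩).ne'
  obtain ⟨M, hM⟩ := hUb.exists_norm_le
  have hfin : μ (slice R U (R x)) ≠ ⊤ :=
    (measure_mono (slice_subset_closedBall hM _)).trans_lt measure_closedBall_lt_top |>.ne
  rw [sliceAverage, setAverage_congr_fun (isOpen_slice hU _).measurableSet hslice,
    setAverage_const hpos hfin]

theorem exists_measurable_ae_eq_comp_of_ae_add_eq (hU : IsOpen U) (hUb : Bornology.IsBounded U)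
    {u : E → ℝ} (hu : Measurable u) (hR : R ∘L R = R)
    (hinv : ∀ w ∈ LinearMap.ker (R : E →ₗ[ℝ] E), ∀ᵐ x ∂μ, x ∈ U → x + w ∈ U → u (x + w) = u x) :
    ∃ f : E → ℝ, Measurable f ∧ ∀ᵐ x ∂μ, x ∈ U → u x = f (R x) := by
  have hker : ∀ t, t - R t ∈ LinearMap.ker (R : E →ₗ[ℝ] E) := fun t ↦ by
    simp [← ContinuousLinearMap.comp_apply, hR]
  have hUm := hU.measurableSet
  have hswap : ∀ᵐ x ∂μ, ∀ᵐ t ∂μ, x ∈ U → x + (t - R t) ∈ U → u (x + (t - R t)) = u x := by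
    rw [Measure.ae_ae_comm]
    · exact ae_of_all _ fun t ↦ hinv _ (hker t)
    · exact measurableSet_setOfPred.2 <| Measurable.imp (by fun_prop) <| Measurable.imp
        (by fun_prop) (measurableSet_setOfPred.1 (measurableSet_eq_fun (by fun_prop) (by fun_prop)))
  refine ⟨sliceAverage μ R U u, measurable_sliceAverage hUm hu, ?_⟩
  filter_upwards [hswap] with x hx hxU
  exact (sliceAverage_apply_eq hU hUb hxU (hx.mono fun t ht ↦ ht hxU)).symm

end SliceAverage

section Projections

variable {𝕜 E : Type*} [RCLike 𝕜] [NormedAddCommGroup E] [InnerProductSpace 𝕜 E]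
  [FiniteDimensional 𝕜 E]

open LinearMap Submodule in
lemma LinearMap.IsSymmetric.ker_eq_ker_sup_ker {P P' R : E →ₗ[𝕜] E} (hP : P.IsSymmetric)
    (hP' : P'.IsSymmetric) (hR : R.IsSymmetric) (hRPP' : range R = range P ⊓ range P') :
    ker R = ker P ⊔ ker P' := by
  rw [← hR.orthogonal_range, ← hP.orthogonal_range, ← hP'.orthogonal_range, hRPP',
    ← orthogonal_orthogonal (_ᗮ ⊔ _ᗮ), ← inf_orthogonal, orthogonal_orthogonal,
    orthogonal_orthogonal]

end Projections

theorem factorization_through_intersection_projection_general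
    (p : ℕ) (P P' R : EuclideanSpace ℝ (Fin p) →L[ℝ] EuclideanSpace ℝ (Fin p))
    (hPsa : ∀ x y, ⟪P x, y⟫ = ⟪x, P y⟫)
    (hP'sa : ∀ x y, ⟪P' x, y⟫ = ⟪x, P' y⟫)
    (hRsa : ∀ x y, ⟪R x, y⟫ = ⟪x, R y⟫) (hRidem : R ∘L R = R)
    (hR : LinearMap.range (R : EuclideanSpace ℝ (Fin p) →ₗ[ℝ] EuclideanSpace ℝ (Fin p)) =
      LinearMap.range (P : EuclideanSpace ℝ (Fin p) →ₗ[ℝ] EuclideanSpace ℝ (Fin p)) ⊓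
        LinearMap.range (P' : EuclideanSpace ℝ (Fin p) →ₗ[ℝ] EuclideanSpace ℝ (Fin p)))
    (g h : EuclideanSpace ℝ (Fin p) → ℝ) (hg : Measurable g) (r : ℝ)
    (hgh : ∀ᵐ x ∂(volume.restrict (Metric.ball (0 : EuclideanSpace ℝ (Fin p)) r)),
      g (P x) = h (P' x)) :
    ∃ f : EuclideanSpace ℝ (Fin p) → ℝ, Measurable f ∧
      ∀ᵐ x ∂(volume.restrict (Metric.ball (0 : EuclideanSpace ℝ (Fin p)) r)),
        g (P x) = f (R x) := by
  have hker := LinearMap.IsSymmetric.ker_eq_ker_sup_ker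
    (hPsa : (P : EuclideanSpace ℝ (Fin p) →ₗ[ℝ] _).IsSymmetric)
    (hP'sa : (P' : EuclideanSpace ℝ (Fin p) →ₗ[ℝ] _).IsSymmetric)
    (hRsa : (R : EuclideanSpace ℝ (Fin p) →ₗ[ℝ] _).IsSymmetric) hR
  rw [ae_restrict_iff' measurableSet_ball] at hgh
  have hinv :
      ∀ w ∈ LinearMap.ker (R : EuclideanSpace ℝ (Fin p) →ₗ[ℝ] EuclideanSpace ℝ (Fin p)),
        ∀ᵐ x, x ∈ ball 0 r → x + w ∈ ball 0 r → g (P (x + w)) = g (P x) := fun w hw ↦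
    ae_add_eq_of_mem_sup (u := fun x ↦ g (P x)) (v := fun x ↦ h (P' x)) isOpen_ball
      (convex_ball 0 r) (fun x a (ha : P a = 0) ↦ by rw [map_add, ha, add_zero])
      (fun x b (hb : P' b = 0) ↦ by rw [map_add, hb, add_zero]) hgh (hker.le hw)
  obtain ⟨f, hf, hgf⟩ := exists_measurable_ae_eq_comp_of_ae_add_eq isOpen_ball isBounded_ball
    (hg.comp P.measurable) hRidem hinv
  exact ⟨f, hf, (ae_restrict_iff' measurableSet_ball).2 hgf⟩

/-- If `g(Px) = h(P'x)` for Lebesgue-a.e. `x` in a ball `B(0,r)`, where `P`, `P'` are orthogonal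
projections and `R` is the orthogonal projection onto the intersection of their ranges, then
`g(Px) = f(Rx)` a.e. on `B(0,r)` for some measurable `f`. -/
theorem factorization_through_intersection_projection
    (p : ℕ) (P P' R : EuclideanSpace ℝ (Fin p) →L[ℝ] EuclideanSpace ℝ (Fin p))
    (hPsa : ∀ x y, ⟪P x, y⟫ = ⟪x, P y⟫) (hPidem : P ∘L P = P)
    (hP'sa : ∀ x y, ⟪P' x, y⟫ = ⟪x, P' y⟫) (hP'idem : P' ∘L P' = P')
    (hRsa : ∀ x y, ⟪R x, y⟫ = ⟪x, R y⟫) (hRidem : R ∘L R = R)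
    (hR : LinearMap.range (R : EuclideanSpace ℝ (Fin p) →ₗ[ℝ] EuclideanSpace ℝ (Fin p)) =
      LinearMap.range (P : EuclideanSpace ℝ (Fin p) →ₗ[ℝ] EuclideanSpace ℝ (Fin p)) ⊓
        LinearMap.range (P' : EuclideanSpace ℝ (Fin p) →ₗ[ℝ] EuclideanSpace ℝ (Fin p)))
    (g h : EuclideanSpace ℝ (Fin p) → ℝ) (hg : Measurable g) (hh : Measurable h)
    (r : ℝ) (hr : 0 < r)
    (hgh : ∀ᵐ x ∂(volume.restrict (Metric.ball (0 : EuclideanSpace ℝ (Fin p)) r)),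
      g (P x) = h (P' x)) :
    ∃ f : EuclideanSpace ℝ (Fin p) → ℝ, Measurable f ∧
      ∀ᵐ x ∂(volume.restrict (Metric.ball (0 : EuclideanSpace ℝ (Fin p)) r)),
        g (P x) = f (R x) :=
  factorization_through_intersection_projection_general p P P' R hPsa hP'sa hRsa hRidem hR g h hg r
    hgh
end

section
/- Let X be a random vector in R^p whose distribution has a density (with respect to Lebesgue measure) whose support F satisfies: the boundary of F has Lebesgue measure zero. Suppose also that for any two subspaces E, E' with orthogonal projections P, P' satisfying E[Y|X] = E[Y|PX] = E[Y|P'X] a.s., the restriction argument of Lemma 1 applies on every ball in the interior of F. Then the intersection of all mean dimension reduction subspaces is itself a mean dimension reduction subspace; consequently there is a unique MDRS of minimal dimension (the central mean subspace exists). -/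
open MeasureTheory

/-- The orthogonal projection of the ambient space onto a subspace `E`, as a map of the whole
space. -/
noncomputable def projCLM (p : ℕ) (E : Submodule ℝ (EuclideanSpace ℝ (Fin p))) :
    EuclideanSpace ℝ (Fin p) →L[ℝ] EuclideanSpace ℝ (Fin p) :=
  E.subtypeL ∘L E.orthogonalProjectionOnto

/-- `E` is a mean dimension reduction subspace: `E[Y|X] = E[Y|P_E X]` a.s. -/
def IsMDRS {Ω : Type*} (mΩ : MeasurableSpace Ω) (μ : @MeasureTheory.Measure Ω mΩ)
    {p : ℕ} (X : Ω → EuclideanSpace ℝ (Fin p)) (Y : Ω → ℝ)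
    (E : Submodule ℝ (EuclideanSpace ℝ (Fin p))) : Prop :=
  μ[Y | MeasurableSpace.comap X inferInstance]
    =ᵐ[μ] μ[Y | MeasurableSpace.comap (fun ω => projCLM p E (X ω)) inferInstance]

/-! Almost surely `X` lies in the interior `U` of the support `F`: off `U` one is either outside
`F`, where the density vanishes, or on the Lebesgue-null boundary of `F`. Countably many balls
cover `U`, and on each of them the local hypothesis identifies `E[Y|X]` with `E[Y|P_{E ⊓ E'} X]`;
so MDRS's are closed under `⊓`. Subspaces of a finite-dimensional space satisfy the descending
chain condition, so an `⊓`-closed family contains its infimum, which is then its unique member of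
least dimension. -/

open Set Metric

theorem InfClosed.sInf_mem_of_wellFoundedLT {α : Type*} [CompleteLattice α] [WellFoundedLT α]
    {s : Set α} (hs : InfClosed s) (hne : s.Nonempty) : sInf s ∈ s :=
  CompleteLattice.IsSupFiniteCompact.isSupClosedCompact αᵒᵈ
    (CompleteLattice.WellFoundedGT.isSupFiniteCompact αᵒᵈ) s hne hs.dual

theorem Submodule.existsUnique_finrank_le_of_sInf_mem {K V : Type*} [DivisionRing K]
    [AddCommGroup V] [Module K V] [FiniteDimensional K V] {S : Set (Submodule K V)}
    (hS : sInf S ∈ S) :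
    ∃! E, E ∈ S ∧ ∀ E' ∈ S, Module.finrank K E ≤ Module.finrank K E' := by
  refine ⟨sInf S, ⟨hS, fun E' hE' => Submodule.finrank_mono (sInf_le hE')⟩, ?_⟩
  rintro E ⟨hE, hE_min⟩
  exact (Submodule.eq_of_le_of_finrank_le (sInf_le hE) (hE_min _ hS)).symm

theorem ae_withDensity_mem_interior {α : Type*} [MeasurableSpace α] [TopologicalSpace α]
    [OpensMeasurableSpace α] {ν : Measure α} {g : α → ENNReal} {F : Set α} (hF : IsClosed F)
    (hg : Function.support g ⊆ F) (hbd : ν (frontier F) = 0) :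
    ∀ᵐ x ∂ν.withDensity g, x ∈ interior F := by
  have h_compl : ν.withDensity g Fᶜ = 0 := by
    rw [withDensity_apply _ hF.isOpen_compl.measurableSet]
    exact setLIntegral_eq_zero hF.isOpen_compl.measurableSet
      fun x hx => Function.notMem_support.1 fun h => hx (hg h)
  have h_frontier : ν.withDensity g (frontier F) = 0 :=
    withDensity_absolutelyContinuous ν g hbd
  refine measure_mono_null (fun x hx => ?_) (measure_union_null h_compl h_frontier)
  by_cases hxF : x ∈ F
  · exact Or.inr ⟨subset_closure hxF, hx⟩
  · exact Or.inl hxF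

theorem ae_imp_of_forall_ball_subset {Ω α : Type*} [MeasurableSpace Ω] {μ : Measure Ω}
    [PseudoMetricSpace α] [SecondCountableTopology α] {U : Set α} (hU : IsOpen U)
    (X : Ω → α) {P : Ω → Prop}
    (h : ∀ x r, 0 < r → ball x r ⊆ U → ∀ᵐ ω ∂μ, X ω ∈ ball x r → P ω) :
    ∀ᵐ ω ∂μ, X ω ∈ U → P ω := by
  choose r hr hrU using fun x : U => Metric.isOpen_iff.1 hU x x.2
  obtain ⟨T, hT, hTU⟩ :=
    TopologicalSpace.isOpen_iUnion_countable (fun x : U => ball (x : α) (r x)) fun _ => isOpen_ball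
  filter_upwards [(ae_ball_iff hT).2 fun i _ => h i (r i) (hr i) (hrU i)] with ω hω hXU
  have hX_cover : X ω ∈ ⋃ i ∈ T, ball (i : α) (r i) :=
    hTU ▸ mem_iUnion.2 ⟨⟨X ω, hXU⟩, mem_ball_self (hr _)⟩
  obtain ⟨i, hi, hXi⟩ := mem_iUnion₂.1 hX_cover
  exact hω i hi hXi

theorem projCLM_top (p : ℕ) (x : EuclideanSpace ℝ (Fin p)) : projCLM p ⊤ x = x :=
  Submodule.starProjection_eq_self_iff.2 Submodule.mem_top

theorem isMDRS_top {Ω : Type*} (mΩ : MeasurableSpace Ω) (μ : Measure Ω) {p : ℕ}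
    (X : Ω → EuclideanSpace ℝ (Fin p)) (Y : Ω → ℝ) : IsMDRS mΩ μ X Y ⊤ := by
  simp only [IsMDRS, projCLM_top]
  rfl

theorem central_mean_subspace_exists_general
    {Ω : Type*} [mΩ : MeasurableSpace Ω] (μ : Measure Ω)
    (p : ℕ) (X : Ω → EuclideanSpace ℝ (Fin p)) (hXmeas : Measurable X)
    (Y : Ω → ℝ)
    -- `X` has density `f` with respect to Lebesgue measure
    (f : EuclideanSpace ℝ (Fin p) → ℝ)
    (hf : Measure.map X μ = volume.withDensity fun x => ENNReal.ofReal (f x))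
    -- the boundary of the support `F` of the density is Lebesgue-null
    (hbd : volume (frontier (closure (Function.support f))) = 0)
    -- Lemma 1 applies on every ball contained in the interior of `F`
    (hlem : ∀ E E' : Submodule ℝ (EuclideanSpace ℝ (Fin p)),
      IsMDRS mΩ μ X Y E → IsMDRS mΩ μ X Y E' →
      ∀ (x₀ : EuclideanSpace ℝ (Fin p)) (r : ℝ), 0 < r →
        Metric.ball x₀ r ⊆ interior (closure (Function.support f)) →
        ∀ᵐ ω ∂μ, X ω ∈ Metric.ball x₀ r →
          (μ[Y | MeasurableSpace.comap X inferInstance]) ω =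
            (μ[Y | MeasurableSpace.comap
                (fun ω' => projCLM p (E ⊓ E') (X ω')) inferInstance]) ω) :
    IsMDRS mΩ μ X Y (sInf {E | IsMDRS mΩ μ X Y E}) ∧
      ∃! E : Submodule ℝ (EuclideanSpace ℝ (Fin p)),
        IsMDRS mΩ μ X Y E ∧
          ∀ E' : Submodule ℝ (EuclideanSpace ℝ (Fin p)),
            IsMDRS mΩ μ X Y E' → Module.finrank ℝ E ≤ Module.finrank ℝ E' := by
  have hX_interior : ∀ᵐ ω ∂μ, X ω ∈ interior (closure (Function.support f)) := by
    refine ae_of_ae_map hXmeas.aemeasurable ?_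
    rw [hf]
    exact ae_withDensity_mem_interior isClosed_closure
      ((Function.support_comp_subset ENNReal.ofReal_zero f).trans subset_closure) hbd
  have hinf : InfClosed {E | IsMDRS mΩ μ X Y E} := fun E hE E' hE' => by
    filter_upwards [ae_imp_of_forall_ball_subset isOpen_interior X (hlem E E' hE hE'),
      hX_interior] with ω h hω using h hω
  have hmem := hinf.sInf_mem_of_wellFoundedLT ⟨⊤, isMDRS_top mΩ μ X Y⟩
  exact ⟨hmem, Submodule.existsUnique_finrank_le_of_sInf_mem hmem⟩

/-- Existence of the central mean subspace: if `X` has a density whose support has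
Lebesgue-null boundary, and the restriction argument of Lemma 1 is available on every ball of
the interior of the support, then the intersection of all mean dimension reduction subspaces is
itself an MDRS, and there is a unique MDRS of minimal dimension. -/
theorem central_mean_subspace_exists
    {Ω : Type*} [mΩ : MeasurableSpace Ω] (μ : Measure Ω) [IsProbabilityMeasure μ]
    (p : ℕ) (X : Ω → EuclideanSpace ℝ (Fin p)) (hXmeas : Measurable X)
    (Y : Ω → ℝ) (hYint : Integrable Y μ)
    -- `X` has density `f` with respect to Lebesgue measure
    (f : EuclideanSpace ℝ (Fin p) → ℝ) (hfmeas : Measurable f) (hfnn : ∀ x, 0 ≤ f x)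
    (hf : Measure.map X μ = volume.withDensity fun x => ENNReal.ofReal (f x))
    -- the boundary of the support `F` of the density is Lebesgue-null
    (hbd : volume (frontier (closure (Function.support f))) = 0)
    -- Lemma 1 applies on every ball contained in the interior of `F`
    (hlem : ∀ E E' : Submodule ℝ (EuclideanSpace ℝ (Fin p)),
      IsMDRS mΩ μ X Y E → IsMDRS mΩ μ X Y E' →
      ∀ (x₀ : EuclideanSpace ℝ (Fin p)) (r : ℝ), 0 < r →
        Metric.ball x₀ r ⊆ interior (closure (Function.support f)) →
        ∀ᵐ ω ∂μ, X ω ∈ Metric.ball x₀ r →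
          (μ[Y | MeasurableSpace.comap X inferInstance]) ω =
            (μ[Y | MeasurableSpace.comap
                (fun ω' => projCLM p (E ⊓ E') (X ω')) inferInstance]) ω) :
    IsMDRS mΩ μ X Y (sInf {E | IsMDRS mΩ μ X Y E}) ∧
      ∃! E : Submodule ℝ (EuclideanSpace ℝ (Fin p)),
        IsMDRS mΩ μ X Y E ∧
          ∀ E' : Submodule ℝ (EuclideanSpace ℝ (Fin p)),
            IsMDRS mΩ μ X Y E' → Module.finrank ℝ E ≤ Module.finrank ℝ E' :=
  central_mean_subspace_exists_general (mΩ := mΩ) μ p X hXmeas Y f hf hbd hlem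
end

section
/- Let N_Y be a random d×d symmetric matrix (measurable function of a random variable Y) with E‖N_Y‖ < ∞, satisfying: for every nonzero η ∈ R^d, P(η^T N_Y η = 0) < 1. Let Ψ be a countable family of bounded measurable functions whose linear span is dense in L¹(E[‖N_Y‖ | Y = y] P_Y(dy))-weighted sense such that for every nonzero η there is a finite linear combination ψ of elements of Ψ with η^T E[N_Y ψ(Y)] ≠ 0. Then there exists a finite linear combination ψ of elements of Ψ such that the matrix E[N_Y ψ(Y)] is invertible. -/
/-!
Let `M` have maximal rank `r` in the span `W` of the matrices `E[N_Y ψ(Y)]`. If `M` were singular,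
pick `x ≠ 0` with `M x = 0` and `A ∈ W` with `xᵀ A x ≠ 0`. Compressing to the eigenvectors of `M`
with nonzero eigenvalue together with `x`, the matrix `M + t A` becomes
`[[D + t A₁₁, t A₁₂], [t A₂₁, t xᵀ A x]]` with `D` invertible diagonal. Its determinant is
`t (det D · xᵀ A x + O(t))`, nonzero for small `t ≠ 0`, so `M + t A ∈ W` has rank `> r`.
-/

open Filter Topology

namespace Matrix

variable {m n : Type*}

theorem isSymm_of_mem_span {R : Type*} [Semiring R] {S : Set (Matrix n n R)}
    (hS : ∀ A ∈ S, A.IsSymm) {M : Matrix n n R} (hM : M ∈ Submodule.span R S) : M.IsSymm := by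
  induction hM using Submodule.span_induction with
  | mem A hA => exact hS A hA
  | zero => exact isSymm_zero
  | add A B _ _ hA hB => exact hA.add hB
  | smul c A _ hA => exact hA.smul c

variable [Fintype m] [Fintype n]

theorem card_le_rank_of_isUnit_transpose_mul_mul {K : Type*} [Field K] [DecidableEq m]
    (N : Matrix n n K) (P : Matrix n m K) (h : IsUnit (Pᵀ * N * P)) :
    Fintype.card m ≤ N.rank :=
  calc Fintype.card m = (Pᵀ * N * P).rank := (rank_of_isUnit _ h).symm
    _ ≤ (Pᵀ * N).rank := rank_mul_le_left _ _
    _ ≤ N.rank := rank_mul_le_right _ _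

theorem eventually_isUnit_fromBlocks_add_smul {𝕜 : Type*} [NontriviallyNormedField 𝕜]
    [DecidableEq m] [DecidableEq n] {X : Matrix m m 𝕜} (hX : IsUnit X)
    {A : Matrix (m ⊕ n) (m ⊕ n) 𝕜} (hA : IsUnit A.toBlocks₂₂) :
    ∀ᶠ t in 𝓝[≠] (0 : 𝕜), IsUnit (fromBlocks X 0 0 0 + t • A) := by
  set H : 𝕜 → Matrix (m ⊕ n) (m ⊕ n) 𝕜 := fun t =>
    fromBlocks X A.toBlocks₁₂ 0 A.toBlocks₂₂ + t • fromBlocks A.toBlocks₁₁ 0 A.toBlocks₂₁ 0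
  -- `H t` is the matrix with its second block column divided by `t`
  have hfactor : ∀ t, fromBlocks X 0 0 0 + t • A = H t * fromBlocks 1 0 0 (t • 1) := by
    intro t
    conv_lhs => rw [← fromBlocks_toBlocks A]
    simp [H, fromBlocks_smul, fromBlocks_add, fromBlocks_multiply]
  have hH0 : (H 0).det ≠ 0 := by
    simpa [H, det_fromBlocks_zero₂₁, isUnit_iff_ne_zero] using
      (isUnit_iff_isUnit_det _).1 hX |>.mul ((isUnit_iff_isUnit_det _).1 hA)
  have hcont : Continuous fun t => (H t).det := by
    simp only [H]; fun_prop
  filter_upwards [nhdsWithin_le_nhds (hcont.continuousAt.eventually_ne hH0),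
    self_mem_nhdsWithin] with t hHt ht
  rw [isUnit_iff_isUnit_det, hfactor, det_mul, det_fromBlocks_zero₂₁, det_smul]
  simp [hHt, show t ≠ 0 from ht]

theorem IsSymm.exists_isUnit_transpose_mul_mul {M : Matrix n n ℝ} (hM : M.IsSymm) :
    ∃ Q : Matrix n (Fin M.rank) ℝ, IsUnit (Qᵀ * M * Q) := by
  classical
  have hH : M.IsHermitian := by simpa [IsHermitian] using hM.eq
  set U : Matrix n n ℝ := (hH.eigenvectorUnitary : Matrix n n ℝ)
  have hdiag : Uᵀ * M * U = diagonal hH.eigenvalues := by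
    simpa [U, star_eq_conjTranspose] using hH.conjStarAlgAut_star_eigenvectorUnitary
  let e : Fin M.rank ≃ {i // hH.eigenvalues i ≠ 0} :=
    Fintype.equivFinOfCardEq hH.rank_eq_card_non_zero_eigs.symm |>.symm
  refine ⟨U.submatrix id (Subtype.val ∘ e), ?_⟩
  have hQMQ : (U.submatrix id (Subtype.val ∘ e))ᵀ * M * U.submatrix id (Subtype.val ∘ e) =
      diagonal (hH.eigenvalues ∘ Subtype.val ∘ e) := by
    rw [← submatrix_diagonal _ _ (Subtype.val_injective.comp e.injective), ← hdiag,
      submatrix_mul _ _ _ id _ Function.bijective_id,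
      submatrix_mul _ _ _ id _ Function.bijective_id]
    rfl
  rw [hQMQ, isUnit_diagonal, Pi.isUnit_iff]
  exact fun i => (e i).2.isUnit

theorem IsSymm.exists_rank_lt_rank_add_smul_s16 {M : Matrix n n ℝ} (hM : M.IsSymm) {x : n → ℝ}
    (hMx : M *ᵥ x = 0) {A : Matrix n n ℝ} (hxA : x ⬝ᵥ A *ᵥ x ≠ 0) :
    ∃ t : ℝ, M.rank < (M + t • A).rank := by
  obtain ⟨Q, hQ⟩ := hM.exists_isUnit_transpose_mul_mul
  set X := replicateCol Unit x
  have hMX : M * X = 0 := by rw [← replicateCol_mulVec, hMx, replicateCol_zero]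
  have hXM : Xᵀ * M = 0 := by rw [← hM.eq, ← transpose_mul, hMX, transpose_zero]
  set P := fromCols Q X
  have hblocks : ∀ N : Matrix n n ℝ, Pᵀ * N * P =
      Matrix.fromBlocks (Qᵀ * N * Q) (Qᵀ * N * X) (Xᵀ * N * Q) (Xᵀ * N * X) := by
    intro N
    rw [transpose_fromCols, fromRows_mul, fromRows_mul_fromCols]
  have hPMP : Pᵀ * M * P = Matrix.fromBlocks (Qᵀ * M * Q) 0 0 0 := by
    rw [hblocks, Matrix.mul_assoc Qᵀ M X, hMX, hXM, Matrix.mul_zero, Matrix.zero_mul,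
      Matrix.zero_mul]
  have hA : IsUnit (Pᵀ * A * P).toBlocks₂₂ := by
    rw [hblocks, toBlocks_fromBlocks₂₂, isUnit_iff_isUnit_det, det_unique, isUnit_iff_ne_zero,
      transpose_replicateCol, Matrix.mul_assoc, ← replicateCol_mulVec,
      replicateRow_mul_replicateCol]
    exact hxA
  obtain ⟨t, ht⟩ := (eventually_isUnit_fromBlocks_add_smul hQ hA).exists
  rw [← hPMP, ← Matrix.smul_mul, ← Matrix.add_mul, ← Matrix.mul_smul, ← Matrix.mul_add] at ht
  refine ⟨t, ?_⟩
  simpa using card_le_rank_of_isUnit_transpose_mul_mul _ _ ht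

theorem exists_det_ne_zero_of_forall_exists_dotProduct_mulVec_ne_zero
    [DecidableEq n] (W : Submodule ℝ (Matrix n n ℝ)) (hW : ∀ M ∈ W, M.IsSymm)
    (h : ∀ x : n → ℝ, x ≠ 0 → ∃ A ∈ W, x ⬝ᵥ A *ᵥ x ≠ 0) :
    ∃ M ∈ W, M.det ≠ 0 := by
  classical
  obtain ⟨M, hMW, hMr⟩ := Nat.findGreatest_spec (P := fun k => ∃ M ∈ W, M.rank = k)
    (Nat.zero_le (Fintype.card n)) ⟨0, W.zero_mem, rank_zero⟩
  have hmax : ∀ A ∈ W, A.rank ≤ M.rank := fun A hA =>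
    hMr ▸ Nat.le_findGreatest A.rank_le_card_width ⟨A, hA, rfl⟩
  by_contra! hdet
  obtain ⟨x, hx, hMx⟩ := exists_mulVec_eq_zero_iff.2 (hdet M hMW)
  obtain ⟨A, hAW, hxA⟩ := h x hx
  obtain ⟨t, ht⟩ := (hW M hMW).exists_rank_lt_rank_add_smul_s16 hMx hxA
  exact ht.not_ge (hmax _ (W.add_mem hMW (W.smul_mem t hAW)))

end Matrix

namespace MeasureTheory

variable {Ω n : Type*} [MeasurableSpace Ω] (μ : Measure Ω)

noncomputable def momentMatrix (N : Ω → Matrix n n ℝ) (g : Ω → ℝ) : Matrix n n ℝ :=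
  Matrix.of fun i j => ∫ ω, N ω i j * g ω ∂μ

variable {μ}

theorem momentMatrix_isSymm {N : Ω → Matrix n n ℝ} (hN : ∀ ω, (N ω).IsSymm) (g : Ω → ℝ) :
    (momentMatrix μ N g).IsSymm :=
  Matrix.IsSymm.ext fun i j => by simp only [momentMatrix, Matrix.of_apply, (hN _).apply]

theorem momentMatrix_finset_sum {ι : Type*} {N : Ω → Matrix n n ℝ} {g : ι → Ω → ℝ}
    (s : Finset ι) (a : ι → ℝ) (hg : ∀ k ∈ s, ∀ i j, Integrable (fun ω => N ω i j * g k ω) μ) :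
    momentMatrix μ N (fun ω => ∑ k ∈ s, a k * g k ω) = ∑ k ∈ s, a k • momentMatrix μ N (g k) := by
  ext i j
  simp only [momentMatrix, Matrix.of_apply, Matrix.sum_apply, Matrix.smul_apply, smul_eq_mul,
    Finset.mul_sum, mul_left_comm (N _ i j)]
  rw [integral_finsetSum s fun k hk => (hg k hk i j).const_mul (a k)]
  simp only [integral_const_mul]

end MeasureTheory

open MeasureTheory Matrix

theorem tf2_exists_invertible_combination_general
    {Ω : Type*} [mΩ : MeasurableSpace Ω] (μ : Measure Ω)
    (d : ℕ) (Y : Ω → ℝ) (hYmeas : Measurable Y)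
    (NY : ℝ → Matrix (Fin d) (Fin d) ℝ)
    (hNYsymm : ∀ y, (NY y).IsSymm)
    (hNYint : ∀ i j, Integrable (fun ω => NY (Y ω) i j) μ)
    -- the countable family of bounded measurable functions
    (Ψ : ℕ → ℝ → ℝ) (hΨmeas : ∀ k, Measurable (Ψ k))
    (hΨbdd : ∀ k, ∃ C : ℝ, ∀ y, |Ψ k y| ≤ C)
    -- no nonzero `η` is isotropic for all `E[N_Y ψ(Y)]`, `ψ` a finite combination from `Ψ`
    (hiso : ∀ η : Fin d → ℝ, η ≠ 0 → ∃ (s : Finset ℕ) (a : ℕ → ℝ),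
      η ⬝ᵥ (Matrix.of fun i j =>
          ∫ ω, NY (Y ω) i j * ∑ k ∈ s, a k * Ψ k (Y ω) ∂μ).mulVec η ≠ 0) :
    ∃ (s : Finset ℕ) (a : ℕ → ℝ),
      (Matrix.of fun i j =>
          ∫ ω, NY (Y ω) i j * ∑ k ∈ s, a k * Ψ k (Y ω) ∂μ : Matrix (Fin d) (Fin d) ℝ).det
        ≠ 0 := by
  set N : Ω → Matrix (Fin d) (Fin d) ℝ := fun ω => NY (Y ω)
  choose C hC using hΨbdd
  have hint : ∀ k i j, Integrable (fun ω => N ω i j * Ψ k (Y ω)) μ := fun k i j =>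
    (hNYint i j).mul_bdd ((hΨmeas k).comp hYmeas).aestronglyMeasurable
      (ae_of_all _ fun ω => (Real.norm_eq_abs _).trans_le (hC k (Y ω)))
  have hsum (s : Finset ℕ) (a : ℕ → ℝ) := momentMatrix_finset_sum (N := N)
    (g := fun k ω => Ψ k (Y ω)) s a fun k _ => hint k
  set W := Submodule.span ℝ (Set.range fun k => momentMatrix μ N fun ω => Ψ k (Y ω))
  have hmem (s : Finset ℕ) (a : ℕ → ℝ) :
      momentMatrix μ N (fun ω => ∑ k ∈ s, a k * Ψ k (Y ω)) ∈ W :=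
    hsum s a ▸ W.sum_mem fun k _ => W.smul_mem _ (Submodule.subset_span ⟨k, rfl⟩)
  have hW : ∀ M ∈ W, M.IsSymm := fun M => isSymm_of_mem_span <| by
    rintro _ ⟨k, rfl⟩
    exact momentMatrix_isSymm (fun ω => hNYsymm (Y ω)) _
  obtain ⟨M, hMW, hM⟩ := exists_det_ne_zero_of_forall_exists_dotProduct_mulVec_ne_zero W hW
    fun η hη => let ⟨s, a, h⟩ := hiso η hη; ⟨_, hmem s a, h⟩
  obtain ⟨c, rfl⟩ := Finsupp.mem_span_range_iff_exists_finsupp.1 hMW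
  exact ⟨c.support, c, by rwa [Finsupp.sum, ← hsum] at hM⟩

/-- TF2 invertibility: if no nonzero `η` is isotropic for all matrices `E[N_Y ψ(Y)]` with `ψ`
a finite linear combination from the family `Ψ`, then some such matrix is invertible. -/
theorem tf2_exists_invertible_combination
    {Ω : Type*} [mΩ : MeasurableSpace Ω] (μ : Measure Ω) [IsProbabilityMeasure μ]
    (d : ℕ) (Y : Ω → ℝ) (hYmeas : Measurable Y)
    (NY : ℝ → Matrix (Fin d) (Fin d) ℝ) (hNYmeas : ∀ i j, Measurable fun y => NY y i j)
    (hNYsymm : ∀ y, (NY y).IsSymm)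
    (hNYint : ∀ i j, Integrable (fun ω => NY (Y ω) i j) μ)
    -- nondegeneracy: for every nonzero `η`, `P(ηᵀ N_Y η = 0) < 1`
    (hnd : ∀ η : Fin d → ℝ, η ≠ 0 →
      μ {ω | η ⬝ᵥ (NY (Y ω)).mulVec η = 0} < 1)
    -- the countable family of bounded measurable functions
    (Ψ : ℕ → ℝ → ℝ) (hΨmeas : ∀ k, Measurable (Ψ k))
    (hΨbdd : ∀ k, ∃ C : ℝ, ∀ y, |Ψ k y| ≤ C)
    -- no nonzero `η` is isotropic for all `E[N_Y ψ(Y)]`, `ψ` a finite combination from `Ψ`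
    (hiso : ∀ η : Fin d → ℝ, η ≠ 0 → ∃ (s : Finset ℕ) (a : ℕ → ℝ),
      η ⬝ᵥ (Matrix.of fun i j =>
          ∫ ω, NY (Y ω) i j * ∑ k ∈ s, a k * Ψ k (Y ω) ∂μ).mulVec η ≠ 0) :
    ∃ (s : Finset ℕ) (a : ℕ → ℝ),
      (Matrix.of fun i j =>
          ∫ ω, NY (Y ω) i j * ∑ k ∈ s, a k * Ψ k (Y ω) ∂μ : Matrix (Fin d) (Fin d) ℝ).det
        ≠ 0 :=
  tf2_exists_invertible_combination_general (mΩ := mΩ) μ d Y hYmeas NY hNYsymm hNYint Ψ hΨmeas hΨbdd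
    hiso
end

section
/- Let Z be a square-integrable random vector in R^p satisfying the linearity condition Q_c E[Z|P_cZ] = 0 a.s., where P_c is the orthogonal projection onto the central subspace E_c and Q_c = I − P_c, and let Y be a random variable with Y ⫫ Z | P_c Z. Then tr(Var(Z|Y)) = E[‖Q_c Z‖² | Y] + tr(Var(P_c Z | Y)) almost surely. -/
open MeasureTheory Matrix

open ProbabilityTheory Filter

/-!
Write `Z = P_c Z + Q_c Z`. The linearity condition says `E[Q_c Z | P_c Z] = 0`; since conditional
expectation is self-adjoint, testing against indicators of `Y`-events and using `Y ⫫ Z | P_c Z`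
turns this into `E[Q_c Z | Y] = 0`. Hence `E[Z | Y] = E[P_c Z | Y]`, and in the expansion of
`‖Z - E[Z | Y]‖²` the cross term `⟨P_c Z - E[P_c Z | Y], Q_c Z⟩` has zero conditional
expectation, because `P_c Z ⊥ Q_c Z` pointwise and `E[Q_c Z | Y] = 0`.
-/

theorem Matrix.mulVec_dotProduct_one_sub_mulVec {n R : Type*} [Fintype n] [DecidableEq n]
    [CommRing R] {P : Matrix n n R} (hP : P.IsSymm) (hPP : P * P = P) (v : n → R) :
    P *ᵥ v ⬝ᵥ (1 - P) *ᵥ v = 0 := by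
  rw [dotProduct_mulVec, ← vecMul_transpose, hP.eq, vecMul_vecMul, mul_sub, mul_one, hPP,
    sub_self, vecMul_zero, zero_dotProduct]

theorem Matrix.mulVec_add_one_sub_mulVec_apply {n R : Type*} [Fintype n] [DecidableEq n]
    [Ring R] (P : Matrix n n R) (v : n → R) (i : n) : (P *ᵥ v) i + ((1 - P) *ᵥ v) i = v i := by
  rw [sub_mulVec, one_mulVec, Pi.sub_apply, add_sub_cancel]

section

variable {Ω ι : Type*} [Fintype ι] {m m₀ : MeasurableSpace Ω} {μ : Measure[m₀] Ω}

theorem memLp_mulVec_apply {p : ENNReal} {Z : Ω → ι → ℝ} (hZ : ∀ j, MemLp (fun ω => Z ω j) p μ)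
    (M : Matrix ι ι ℝ) (i : ι) : MemLp (fun ω => (M *ᵥ Z ω) i) p μ := by
  simp only [mulVec, dotProduct]
  exact memLp_finsetSum _ fun j _ => (hZ j).const_mul (M i j)

theorem condExp_mulVec_apply {Z : Ω → ι → ℝ} (hZ : ∀ j, Integrable (fun ω => Z ω j) μ)
    (M : Matrix ι ι ℝ) (i : ι) :
    μ[fun ω => (M *ᵥ Z ω) i | m] =ᵐ[μ] fun ω => (M *ᵥ fun j => μ[fun ω => Z ω j | m] ω) i := by
  have hsum : (fun ω => (M *ᵥ Z ω) i) = ∑ j, M i j • fun ω => Z ω j := by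
    ext ω
    simp [mulVec, dotProduct, Finset.sum_apply]
  rw [hsum]
  refine (condExp_finsetSum (fun j _ => (hZ j).smul (M i j)) m).trans ?_
  filter_upwards [ae_all_iff.2 fun j => condExp_smul (μ := μ) (m := m) (M i j) fun ω => Z ω j]
    with ω h
  simp [mulVec, dotProduct, Finset.sum_apply, h]

variable [IsFiniteMeasure μ]

theorem integral_mul_condExp_eq_integral_condExp_mul (hm : m ≤ m₀) {f g : Ω → ℝ}
    (hf : Integrable f μ) (hg : MemLp g ⊤ μ) :
    ∫ ω, f ω * μ[g | m] ω ∂μ = ∫ ω, μ[f | m] ω * g ω ∂μ := by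
  have hg' : MemLp (μ[g | m]) ⊤ μ := hg.condExp le_top
  calc ∫ ω, f ω * μ[g | m] ω ∂μ
      = ∫ ω, μ[f * μ[g | m] | m] ω ∂μ := (integral_condExp hm).symm
    _ = ∫ ω, (μ[f | m] * μ[g | m]) ω ∂μ :=
        integral_congr_ae (condExp_mul_of_stronglyMeasurable_right stronglyMeasurable_condExp
          (hf.mul_of_top_left hg') hf)
    _ = ∫ ω, μ[μ[f | m] * g | m] ω ∂μ :=
        (integral_congr_ae (condExp_mul_of_stronglyMeasurable_left stronglyMeasurable_condExp
          (integrable_condExp.mul_of_top_left hg) (hg.integrable le_top))).symm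
    _ = ∫ ω, μ[f | m] ω * g ω ∂μ := integral_condExp hm

theorem condExp_ae_eq_zero_of_condExp_indicator_eq {mX mY : MeasurableSpace Ω}
    (hm : m ≤ m₀) (hmX : mX ≤ m₀) (hmY : mY ≤ m₀)
    (hCI : ∀ s, MeasurableSet[mY] s →
      μ[s.indicator fun _ => (1 : ℝ) | mX] =ᵐ[μ] μ[s.indicator fun _ => (1 : ℝ) | m])
    {f : Ω → ℝ} (hf : StronglyMeasurable[mX] f) (hf_int : Integrable f μ)
    (hf_zero : μ[f | m] =ᵐ[μ] 0) :
    μ[f | mY] =ᵐ[μ] 0 := by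
  refine (ae_eq_condExp_of_forall_setIntegral_eq hmY hf_int (fun _ _ _ => integrableOn_zero)
    (fun s hs _ => ?_) aestronglyMeasurable_zero).symm
  have h1 : MemLp (s.indicator fun _ => (1 : ℝ)) ⊤ μ :=
    memLp_top_const (1 : ℝ) |>.indicator (hmY s hs)
  calc ∫ ω in s, (0 : Ω → ℝ) ω ∂μ
      = ∫ ω, μ[f | m] ω * s.indicator (fun _ => (1 : ℝ)) ω ∂μ := by
        simp only [Pi.zero_apply, integral_zero]
        exact (integral_eq_zero_of_ae (by filter_upwards [hf_zero] with ω h; simp [h])).symm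
    _ = ∫ ω, f ω * μ[s.indicator fun _ => (1 : ℝ) | m] ω ∂μ :=
        (integral_mul_condExp_eq_integral_condExp_mul hm hf_int h1).symm
    _ = ∫ ω, f ω * μ[s.indicator fun _ => (1 : ℝ) | mX] ω ∂μ :=
        integral_congr_ae ((EventuallyEq.refl _ f).mul (hCI s hs).symm)
    _ = ∫ ω, μ[f | mX] ω * s.indicator (fun _ => (1 : ℝ)) ω ∂μ :=
        integral_mul_condExp_eq_integral_condExp_mul hmX hf_int h1
    _ = ∫ ω in s, f ω ∂μ := by
        rw [condExp_of_stronglyMeasurable hmX hf hf_int, ← integral_indicator (hmY s hs)]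
        congr with ω
        by_cases h : ω ∈ s <;> simp [h]

theorem condVar_add_ae_eq_of_condExp_eq_zero (hm : m ≤ m₀) {X Y : Ω → ℝ}
    (hX : MemLp X 2 μ) (hY : MemLp Y 2 μ) (hY_zero : μ[Y | m] =ᵐ[μ] 0) :
    Var[X + Y; μ | m] =ᵐ[μ] Var[X; μ | m] + μ[Y ^ 2 | m] + 2 * μ[X * Y | m] := by
  have hX2 : Integrable (X ^ 2) μ := hX.integrable_sq
  have hY2 : Integrable (Y ^ 2) μ := hY.integrable_sq
  have hXY : Integrable (2 * (X * Y)) μ := (hX.integrable_mul hY).const_mul 2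
  have hsq : (X + Y) ^ 2 = X ^ 2 + 2 * (X * Y) + Y ^ 2 := by ring
  filter_upwards [condVar_ae_eq_condExp_sq_sub_sq_condExp hm (hX.add hY),
    condVar_ae_eq_condExp_sq_sub_sq_condExp hm hX, condExp_add (hX2.add hXY) hY2 m,
    condExp_add hX2 hXY m, condExp_ofNat (μ := μ) (m := m) 2 (X * Y),
    condExp_add (hX.integrable one_le_two) (hY.integrable one_le_two) m, hY_zero]
    with ω hVarXY hVarX hsplit₁ hsplit₂ htwo hmean hYω
  simp only [Pi.add_apply, Pi.sub_apply, Pi.mul_apply, Pi.pow_apply, Pi.ofNat_apply]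
    at hVarXY hVarX hsplit₁ hsplit₂ htwo hmean hYω ⊢
  rw [hVarXY, hVarX, hsq, hsplit₁, hsplit₂, htwo, hmean, hYω]
  ring

theorem sum_condVar_add_ae_eq_of_orthogonal (hm : m ≤ m₀) {U V : Ω → ι → ℝ}
    (hU : ∀ i, MemLp (fun ω => U ω i) 2 μ) (hV : ∀ i, MemLp (fun ω => V ω i) 2 μ)
    (hV_zero : ∀ i, μ[fun ω => V ω i | m] =ᵐ[μ] 0) (horth : ∀ ω, U ω ⬝ᵥ V ω = 0) :
    ∀ᵐ ω ∂μ, ∑ i, Var[fun ω => U ω i + V ω i; μ | m] ω =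
      μ[fun ω => ∑ i, V ω i ^ 2 | m] ω + ∑ i, Var[fun ω => U ω i; μ | m] ω := by
  have hsq : μ[fun ω => ∑ i, V ω i ^ 2 | m] =ᵐ[μ] ∑ i, μ[fun ω => V ω i ^ 2 | m] := by
    rw [← Finset.sum_fn]
    exact condExp_finsetSum (fun i _ => (hV i).integrable_sq) m
  have hcross : ∑ i, μ[(fun ω => U ω i) * fun ω => V ω i | m] =ᵐ[μ] 0 := by
    have hUV : ∑ i, ((fun ω => U ω i) * fun ω => V ω i) = 0 := by
      ext ω
      simpa [Finset.sum_apply, dotProduct] using horth ω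
    refine (condExp_finsetSum (fun i _ => (hU i).integrable_mul (hV i)) m).symm.trans ?_
    rw [hUV, condExp_zero]
  filter_upwards [ae_all_iff.2 fun i => condVar_add_ae_eq_of_condExp_eq_zero hm (hU i) (hV i)
    (hV_zero i), hsq, hcross] with ω hterm hsqω hcrossω
  simp only [Finset.sum_apply, Pi.add_apply, Pi.mul_apply, Pi.zero_apply] at hterm hsqω hcrossω
  calc ∑ i, Var[fun ω => U ω i + V ω i; μ | m] ω
      = ∑ i, (Var[fun ω => U ω i; μ | m] ω + μ[fun ω => V ω i ^ 2 | m] ω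
          + 2 * μ[(fun ω => U ω i) * fun ω => V ω i | m] ω) :=
        Finset.sum_congr rfl fun i _ => hterm i
    _ = _ := by
      rw [Finset.sum_add_distrib, Finset.sum_add_distrib, ← Finset.mul_sum, hcrossω, hsqω]
      ring

end

theorem condVarEntry_self {Ω : Type*} {mΩ : MeasurableSpace Ω} (μ : Measure Ω)
    (m : MeasurableSpace Ω) {p : ℕ} (W : Ω → Fin p → ℝ) (i : Fin p) :
    condVarEntry mΩ μ m W i i = Var[fun ω => W ω i; μ | m] := by
  simp only [condVarEntry, condVar, sq]
  rfl

/-- Trace decomposition of the conditional variance: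
`tr(Var(Z|Y)) = E[‖Q_c Z‖² | Y] + tr(Var(P_c Z | Y))` a.s., under the linearity condition and
`Y ⫫ Z | P_c Z`. -/
theorem trace_condVar_decomposition
    {Ω : Type*} [mΩ : MeasurableSpace Ω] (μ : Measure Ω) [IsProbabilityMeasure μ]
    (p : ℕ) (Z : Ω → (Fin p → ℝ)) (hZmeas : Measurable Z)
    (hZint2 : ∀ i j, Integrable (fun ω => Z ω i * Z ω j) μ)
    (Y : Ω → ℝ) (hYmeas : Measurable Y)
    (Pc : Matrix (Fin p) (Fin p) ℝ) (hPcsymm : Pc.IsSymm) (hPcidem : Pc * Pc = Pc)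
    (mZ : MeasurableSpace Ω) (hmZ : mZ = MeasurableSpace.comap Z inferInstance)
    (m : MeasurableSpace Ω)
    (hm : m = MeasurableSpace.comap (fun ω => Pc.mulVec (Z ω)) inferInstance)
    (mY : MeasurableSpace Ω) (hmY : mY = MeasurableSpace.comap Y inferInstance)
    -- `Y ⫫ Z | P_c Z`
    (hCS : ∀ A : Set ℝ, MeasurableSet A →
      μ[fun ω => Set.indicator A (fun _ => (1 : ℝ)) (Y ω) | mZ]
        =ᵐ[μ] μ[fun ω => Set.indicator A (fun _ => (1 : ℝ)) (Y ω) | m])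
    -- linearity condition
    (hlin : ∀ᵐ ω ∂μ, (1 - Pc).mulVec (fun i => (μ[fun ω' => Z ω' i | m]) ω) = 0) :
    ∀ᵐ ω ∂μ,
      ∑ i, condVarEntry mΩ μ mY Z i i ω =
        (μ[fun ω' => ∑ j, ((1 - Pc).mulVec (Z ω') j) ^ 2 | mY]) ω +
          ∑ i, condVarEntry mΩ μ mY (fun ω' => Pc.mulVec (Z ω')) i i ω := by
  -- `mZ`, `m` and `mY` are local instances as well; make `mΩ` the ambient σ-algebra again.
  let _ : MeasurableSpace Ω := mΩ
  have hmZ_le : mZ ≤ mΩ := hmZ ▸ hZmeas.comap_le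
  have hm_le : m ≤ mΩ := hm ▸ (by fun_prop : Measurable fun ω => Pc *ᵥ Z ω).comap_le
  have hmY_le : mY ≤ mΩ := hmY ▸ hYmeas.comap_le
  have hZ2 : ∀ i, MemLp (fun ω => Z ω i) 2 μ := fun i =>
    (memLp_two_iff_integrable_sq (by fun_prop)).2 (by simpa [sq] using hZint2 i i)
  have hQZ2 := memLp_mulVec_apply hZ2 (1 - Pc)
  have hQZ_meas : ∀ i, StronglyMeasurable[mZ] fun ω => ((1 - Pc) *ᵥ Z ω) i := fun i =>
    ((by fun_prop : Measurable fun v : Fin p → ℝ => ((1 - Pc) *ᵥ v) i).comp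
      (measurable_iff_comap_le.2 hmZ.ge)).stronglyMeasurable
  have hQZ_m : ∀ i, μ[fun ω => ((1 - Pc) *ᵥ Z ω) i | m] =ᵐ[μ] 0 := fun i => by
    filter_upwards [condExp_mulVec_apply (fun j => (hZ2 j).integrable one_le_two) (1 - Pc) i,
      hlin] with ω h hlinω
    rw [h, hlinω, Pi.zero_apply, Pi.zero_apply]
  have hCI : ∀ s, MeasurableSet[mY] s →
      μ[s.indicator fun _ => (1 : ℝ) | mZ] =ᵐ[μ] μ[s.indicator fun _ => (1 : ℝ) | m] := by
    intro s hs
    obtain ⟨A, hA, rfl⟩ := hmY ▸ hs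
    have hind : (Y ⁻¹' A).indicator (fun _ => (1 : ℝ)) = fun ω => A.indicator (fun _ => 1) (Y ω) :=
      funext fun _ => Set.indicator_comp_right (g := fun _ : ℝ => (1 : ℝ)) Y
    exact hind ▸ hCS A hA
  have hQZ_mY : ∀ i, μ[fun ω => ((1 - Pc) *ᵥ Z ω) i | mY] =ᵐ[μ] 0 := fun i =>
    condExp_ae_eq_zero_of_condExp_indicator_eq hm_le hmZ_le hmY_le hCI (hQZ_meas i)
      ((hQZ2 i).integrable one_le_two) (hQZ_m i)
  filter_upwards [sum_condVar_add_ae_eq_of_orthogonal hmY_le (memLp_mulVec_apply hZ2 Pc) hQZ2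
    hQZ_mY fun ω => mulVec_dotProduct_one_sub_mulVec hPcsymm hPcidem (Z ω)] with ω h
  simpa only [condVarEntry_self, mulVec_add_one_sub_mulVec_apply] using h
end

section
/- Consider the constrained matrix optimization: minimize tr(α^T D α) over α ∈ R^{H×d}, subject to (D^{1/2}α)^T G (D^{1/2}α) = I_d, where D ∈ R^{H×H} is diagonal positive definite and G = D^{-1/2} C^T C D^{-1/2} is positive semidefinite of rank d with spectral decomposition P^T G P = diag(D₀, 0), D₀ ∈ R^{d×d} positive definite. Then the minimum is tr(D₀⁻¹) and the minimizers are exactly α = D^{-1/2} P₁ D₀^{-1/2} H over orthogonal d×d matrices H, where P₁ consists of the first d columns of P. -/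
open Matrix

/-- Constrained minimization of `tr(αᵀ D α)` over `α` with `αᵀ Cᵀ C α = 1`: with
`G = D^{-1/2} Cᵀ C D^{-1/2}` of rank `d`, `G P₁ = P₁ D₀` for `P₁` with orthonormal columns and
`D₀` diagonal positive definite, the minimum equals `tr(D₀⁻¹)`, it is attained, and the
minimizers are exactly `α = D^{-1/2} P₁ D₀^{-1/2} H` with `H` orthogonal. -/
theorem tf1_weight_optimization
    (p H d : ℕ) (C : Matrix (Fin p) (Fin H) ℝ)
    (dv : Fin H → ℝ) (hdv : ∀ h, 0 < dv h)
    (G : Matrix (Fin H) (Fin H) ℝ)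
    (hG : G = diagonal (fun h => (Real.sqrt (dv h))⁻¹) * Cᵀ * C *
      diagonal (fun h => (Real.sqrt (dv h))⁻¹))
    (hGrank : G.rank = d)
    (P₁ : Matrix (Fin H) (Fin d) ℝ) (hP₁ : P₁ᵀ * P₁ = 1)
    (d₀ : Fin d → ℝ) (hd₀ : ∀ k, 0 < d₀ k)
    (hGP₁ : G * P₁ = P₁ * diagonal d₀) :
    ((diagonal (fun h => (Real.sqrt (dv h))⁻¹) * P₁ *
        diagonal (fun k => (Real.sqrt (d₀ k))⁻¹))ᵀ * Cᵀ * C *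
        (diagonal (fun h => (Real.sqrt (dv h))⁻¹) * P₁ *
        diagonal (fun k => (Real.sqrt (d₀ k))⁻¹)) = 1) ∧
    (∀ α : Matrix (Fin H) (Fin d) ℝ, αᵀ * Cᵀ * C * α = 1 →
      (diagonal fun k => (d₀ k)⁻¹).trace ≤ (αᵀ * diagonal dv * α).trace) ∧
    (∀ α : Matrix (Fin H) (Fin d) ℝ, αᵀ * Cᵀ * C * α = 1 →
      ((αᵀ * diagonal dv * α).trace = (diagonal fun k => (d₀ k)⁻¹).trace ↔
        ∃ Hm : Matrix (Fin d) (Fin d) ℝ, Hmᵀ * Hm = 1 ∧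
          α = diagonal (fun h => (Real.sqrt (dv h))⁻¹) * P₁ *
            diagonal (fun k => (Real.sqrt (d₀ k))⁻¹) * Hm)) := by
  set dm : Matrix (Fin H) (Fin H) ℝ := diagonal (fun h => (Real.sqrt (dv h))⁻¹) with hdm
  set sm : Matrix (Fin d) (Fin d) ℝ := diagonal (fun k => (Real.sqrt (d₀ k))⁻¹) with hsm
  set d1 : Matrix (Fin H) (Fin H) ℝ := diagonal (fun h => Real.sqrt (dv h)) with hd1
  set s1 : Matrix (Fin d) (Fin d) ℝ := diagonal (fun k => Real.sqrt (d₀ k)) with hs1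
  have hsq : ∀ h, Real.sqrt (dv h) ≠ 0 := fun h => (Real.sqrt_pos.mpr (hdv h)).ne'
  have hsq0 : ∀ k, Real.sqrt (d₀ k) ≠ 0 := fun k => (Real.sqrt_pos.mpr (hd₀ k)).ne'
  have hd1T : d1ᵀ = d1 := diagonal_transpose _
  have hdmT : dmᵀ = dm := diagonal_transpose _
  have hs1T : s1ᵀ = s1 := diagonal_transpose _
  have hsmT : smᵀ = sm := diagonal_transpose _
  have hd1dm : d1 * dm = 1 := by
    rw [hd1, hdm, diagonal_mul_diagonal, ← diagonal_one]
    exact congrArg _ (funext fun h => mul_inv_cancel₀ (hsq h))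
  have hdmd1 : dm * d1 = 1 := by
    rw [hd1, hdm, diagonal_mul_diagonal, ← diagonal_one]
    exact congrArg _ (funext fun h => inv_mul_cancel₀ (hsq h))
  have hs1sm : s1 * sm = 1 := by
    rw [hs1, hsm, diagonal_mul_diagonal, ← diagonal_one]
    exact congrArg _ (funext fun k => mul_inv_cancel₀ (hsq0 k))
  have hsms1 : sm * s1 = 1 := by
    rw [hs1, hsm, diagonal_mul_diagonal, ← diagonal_one]
    exact congrArg _ (funext fun k => inv_mul_cancel₀ (hsq0 k))
  have hd1d1 : d1 * d1 = diagonal dv := by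
    rw [hd1, diagonal_mul_diagonal]
    exact congrArg _ (funext fun h => Real.mul_self_sqrt (hdv h).le)
  have hs1s1 : s1 * s1 = diagonal d₀ := by
    rw [hs1, diagonal_mul_diagonal]
    exact congrArg _ (funext fun k => Real.mul_self_sqrt (hd₀ k).le)
  have hsmsm : sm * sm = diagonal (fun k => (d₀ k)⁻¹) := by
    rw [hsm, diagonal_mul_diagonal]
    exact congrArg _ (funext fun k => by rw [← mul_inv, Real.mul_self_sqrt (hd₀ k).le])
  have hinv1 : sm * (diagonal d₀ * sm) = 1 := by
    rw [hsm, diagonal_mul_diagonal, diagonal_mul_diagonal, ← diagonal_one]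
    refine congrArg _ (funext fun k => ?_)
    rw [mul_comm (d₀ k), ← mul_assoc, ← mul_inv, Real.mul_self_sqrt (hd₀ k).le,
      inv_mul_cancel₀ (hd₀ k).ne']
  have hinv2 : s1 * (diagonal (fun k => (d₀ k)⁻¹) * s1) = 1 := by
    rw [hs1, diagonal_mul_diagonal, diagonal_mul_diagonal, ← diagonal_one]
    refine congrArg _ (funext fun k => ?_)
    rw [mul_comm ((d₀ k)⁻¹), ← mul_assoc, Real.mul_self_sqrt (hd₀ k).le,
      mul_inv_cancel₀ (hd₀ k).ne']
  -- generalized cancellation lemmas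
  have cdm : ∀ {m : Type} (X : Matrix (Fin H) m ℝ), d1 * (dm * X) = X := fun X => by
    rw [← Matrix.mul_assoc, hd1dm, Matrix.one_mul]
  have cmd : ∀ {m : Type} (X : Matrix (Fin H) m ℝ), dm * (d1 * X) = X := fun X => by
    rw [← Matrix.mul_assoc, hdmd1, Matrix.one_mul]
  have cP : ∀ {m : Type} (X : Matrix (Fin d) m ℝ), P₁ᵀ * (P₁ * X) = X := fun X => by
    rw [← Matrix.mul_assoc, hP₁, Matrix.one_mul]
  have csm : ∀ {m : Type} (X : Matrix (Fin d) m ℝ), sm * (s1 * X) = X := fun X => by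
    rw [← Matrix.mul_assoc, hsms1, Matrix.one_mul]
  have cs : ∀ {m : Type} (X : Matrix (Fin d) m ℝ), s1 * (sm * X) = X := fun X => by
    rw [← Matrix.mul_assoc, hs1sm, Matrix.one_mul]
  have hCC : Cᵀ * C = d1 * (G * d1) := by
    rw [hG]
    simp only [Matrix.mul_assoc, cdm]
    rw [hdmd1, Matrix.mul_one]
  have hGsym : Gᵀ = G := by
    rw [hG]
    simp only [transpose_mul, transpose_transpose, hdmT, Matrix.mul_assoc]
  -- G = P₁ D₀ P₁ᵀ via rank argument
  have hPfac : G * (P₁ * diagonal (fun k => (d₀ k)⁻¹)) = P₁ := by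
    rw [← Matrix.mul_assoc, hGP₁, Matrix.mul_assoc, diagonal_mul_diagonal]
    have : (fun k => d₀ k * (d₀ k)⁻¹) = fun _ => (1:ℝ) :=
      funext fun k => mul_inv_cancel₀ (hd₀ k).ne'
    rw [this, diagonal_one, Matrix.mul_one]
  have hle : LinearMap.range P₁.mulVecLin ≤ LinearMap.range G.mulVecLin := by
    rintro x ⟨v, rfl⟩
    exact ⟨(P₁ * diagonal (fun k => (d₀ k)⁻¹)) *ᵥ v, by
      simp only [mulVecLin_apply, mulVec_mulVec, hPfac]⟩
  have hrankP : P₁.rank = d := by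
    refine le_antisymm (le_trans P₁.rank_le_card_width (by simp)) ?_
    have h1 := Matrix.rank_mul_le_right P₁ᵀ P₁
    rw [hP₁, Matrix.rank_one, Fintype.card_fin] at h1
    exact h1
  have hfr : LinearMap.range P₁.mulVecLin = LinearMap.range G.mulVecLin :=
    Submodule.eq_of_le_of_finrank_eq hle (hrankP.trans hGrank.symm)
  have hproj : P₁ * (P₁ᵀ * G) = G := by
    have hvec : ∀ x, (P₁ * (P₁ᵀ * G)) *ᵥ x = G *ᵥ x := by
      intro x
      obtain ⟨y, hy⟩ : G *ᵥ x ∈ LinearMap.range P₁.mulVecLin := by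
        rw [hfr]; exact ⟨x, rfl⟩
      rw [mulVecLin_apply] at hy
      rw [← mulVec_mulVec x P₁ (P₁ᵀ * G), ← mulVec_mulVec x P₁ᵀ G, ← hy,
        mulVec_mulVec y P₁ᵀ P₁, hP₁, Matrix.one_mulVec]
    ext i j
    have h2 := congrFun (hvec (Pi.single j 1)) i
    rwa [mulVec_single_one, mulVec_single_one] at h2
  have hGPP : G = P₁ * (diagonal d₀ * P₁ᵀ) := by
    conv_lhs => rw [← hGsym, ← hproj]
    rw [transpose_mul, transpose_mul, transpose_transpose, hGsym, hGP₁, Matrix.mul_assoc]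
  -- applied form of hCC
  have hCC' : ∀ {m : Type} (X : Matrix (Fin H) m ℝ),
      Cᵀ * (C * X) = d1 * (G * (d1 * X)) := fun X => by
    rw [← Matrix.mul_assoc, hCC]; simp only [Matrix.mul_assoc]
  -- Part 1: the candidate satisfies the constraint
  have part1 : (dm * P₁ * sm)ᵀ * Cᵀ * C * (dm * P₁ * sm) = 1 := by
    simp only [transpose_mul, hdmT, hsmT, Matrix.mul_assoc, hCC', cdm, cmd]
    rw [← Matrix.mul_assoc G P₁ sm, hGP₁, Matrix.mul_assoc, cP, hinv1]
  -- square-trace helpers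
  have trace_sq : ∀ M : Matrix (Fin H) (Fin d) ℝ,
      (Mᵀ * M).trace = ∑ k, ∑ h, (M h k)^2 := by
    intro M
    simp [Matrix.trace, Matrix.diag, Matrix.mul_apply, sq]
  have tq_nonneg : ∀ M : Matrix (Fin H) (Fin d) ℝ, 0 ≤ (Mᵀ * M).trace := fun M => by
    rw [trace_sq]
    exact Finset.sum_nonneg fun k _ => Finset.sum_nonneg fun h _ => sq_nonneg _
  have tq_zero : ∀ M : Matrix (Fin H) (Fin d) ℝ, (Mᵀ * M).trace = 0 → M = 0 := by
    intro M hM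
    rw [trace_sq] at hM
    ext i j
    have h1 := (Finset.sum_eq_zero_iff_of_nonneg
      (fun k _ => Finset.sum_nonneg fun h _ => sq_nonneg (M h k))).mp hM j (Finset.mem_univ _)
    have h2 := (Finset.sum_eq_zero_iff_of_nonneg
      (fun h _ => sq_nonneg (M h j))).mp h1 i (Finset.mem_univ _)
    simpa using sq_eq_zero_iff.mp h2
  -- Backward direction: any candidate attains the value
  have attain : ∀ Hm : Matrix (Fin d) (Fin d) ℝ, Hmᵀ * Hm = 1 →
      ((dm * P₁ * sm * Hm)ᵀ * diagonal dv * (dm * P₁ * sm * Hm)).trace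
        = (diagonal fun k => (d₀ k)⁻¹).trace := by
    intro Hm hHm
    have hHm' : Hm * Hmᵀ = 1 := mul_eq_one_comm.mp hHm
    have e1 : (dm * P₁ * sm * Hm)ᵀ * diagonal dv * (dm * P₁ * sm * Hm)
        = Hmᵀ * ((diagonal fun k => (d₀ k)⁻¹) * Hm) := by
      rw [← hd1d1]
      simp only [transpose_mul, hdmT, hsmT, Matrix.mul_assoc, cdm, cmd, cP]
      rw [← Matrix.mul_assoc sm sm Hm, hsmsm]
    rw [e1, Matrix.trace_mul_comm, Matrix.mul_assoc, hHm', Matrix.mul_one]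
  -- Main analysis for a feasible α
  have main : ∀ α : Matrix (Fin H) (Fin d) ℝ, αᵀ * Cᵀ * C * α = 1 →
      ∃ Q : Matrix (Fin H) (Fin d) ℝ,
        (αᵀ * diagonal dv * α).trace
          = (diagonal fun k => (d₀ k)⁻¹).trace + (Qᵀ * Q).trace ∧
        (Q = 0 → ∃ Hm : Matrix (Fin d) (Fin d) ℝ, Hmᵀ * Hm = 1 ∧
          α = dm * P₁ * sm * Hm) := by
    intro α hα
    set β := d1 * α with hβdef
    have hαβ : α = dm * β := (cmd α).symm
    have hconstr : βᵀ * (G * β) = 1 := by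
      have e1 : βᵀ * (G * β) = αᵀ * Cᵀ * C * α := by
        rw [hβdef, transpose_mul, hd1T]
        simp only [Matrix.mul_assoc, hCC']
      rw [e1, hα]
    set B := P₁ᵀ * β with hBdef
    have hBt : Bᵀ = βᵀ * P₁ := by rw [hBdef, transpose_mul, transpose_transpose]
    have hBc : Bᵀ * (diagonal d₀ * B) = 1 := by
      rw [hBt, hBdef, ← hconstr, hGPP]
      simp only [Matrix.mul_assoc]
    have hU : (s1 * B)ᵀ * (s1 * B) = 1 := by
      rw [transpose_mul, hs1T, Matrix.mul_assoc Bᵀ s1 (s1 * B),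
        ← Matrix.mul_assoc s1 s1 B, hs1s1]
      exact hBc
    have hUU : (s1 * B) * (s1 * B)ᵀ = 1 := mul_eq_one_comm.mp hU
    have hBBt : B * Bᵀ = diagonal fun k => (d₀ k)⁻¹ := by
      have h2 : sm * ((s1 * B) * (s1 * B)ᵀ * sm) = sm * (1 * sm) := by rw [hUU]
      rw [transpose_mul, hs1T] at h2
      simp only [Matrix.mul_assoc] at h2
      rw [csm] at h2
      simpa only [hs1sm, Matrix.mul_one, Matrix.one_mul, ← hsmsm] using h2
    set Q := β - P₁ * B with hQdef
    have hQs : Qᵀ * Q = βᵀ * β - Bᵀ * B := by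
      rw [hQdef, transpose_sub, Matrix.sub_mul, Matrix.mul_sub, Matrix.mul_sub]
      have e1 : βᵀ * (P₁ * B) = Bᵀ * B := by rw [← Matrix.mul_assoc, ← hBt]
      have e2 : (P₁ * B)ᵀ * β = Bᵀ * B := by
        rw [transpose_mul, Matrix.mul_assoc, ← hBdef]
      have e3 : (P₁ * B)ᵀ * (P₁ * B) = Bᵀ * B := by
        rw [transpose_mul, Matrix.mul_assoc, cP]
      rw [e1, e2, e3]
      abel
    have hsplit : βᵀ * β = Bᵀ * B + Qᵀ * Q := by rw [hQs]; abel
    have htarget : αᵀ * diagonal dv * α = βᵀ * β := by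
      rw [hβdef, transpose_mul, hd1T, ← hd1d1]
      simp only [Matrix.mul_assoc]
    have htrB : (Bᵀ * B).trace = (diagonal fun k => (d₀ k)⁻¹).trace := by
      rw [Matrix.trace_mul_comm, hBBt]
    refine ⟨Q, ?_, ?_⟩
    · rw [htarget, hsplit, Matrix.trace_add, htrB]
    · intro hQ0
      have hβP : β = P₁ * B := sub_eq_zero.mp (hQdef.symm.trans hQ0)
      refine ⟨s1 * B, hU, ?_⟩
      rw [hαβ, hβP]
      simp only [Matrix.mul_assoc, csm]
  refine ⟨part1, ?_, ?_⟩
  · intro α hα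
    obtain ⟨Q, heq, -⟩ := main α hα
    rw [heq]
    linarith [tq_nonneg Q]
  · intro α hα
    obtain ⟨Q, heq, hmin⟩ := main α hα
    constructor
    · intro htr
      have h0 : (Qᵀ * Q).trace = 0 := by linarith [tq_nonneg Q, heq ▸ htr]
      exact hmin (tq_zero Q h0)
    · rintro ⟨Hm, hHm, rfl⟩
      exact attain Hm hHm
end
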